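/- arXiv:2407.08339 — 7 statements merged into one kernel-verified Lean document; each statement's English description precedes it below -/
import Mathlib

section
/- Let G be a finite subgroup of GL_n(ℝ), let b₁,…,b_l ∈ ℝ[X] generate ℝ[X] as a module over ℝ[X]^G (i.e., every p ∈ ℝ[X] can be written as ∑_{i=1}^l a_i b_i with a₁,…,a_l ∈ ℝ[X]^G), and let B be the l×l matrix with entries B_{ij} := R_G(b_i b_j), which are G-invariant. Then for every f ∈ ℝ[X]^G the following are equivalent: (i) f is a sum of squares of polynomials in ℝ[X]; (ii) there exist finitely many vectors a⁽¹⁾,…,a⁽ᵗ⁾ ∈ (ℝ[X]^G)^l such that f = ∑_{s=1}^t (a⁽ˢ⁾)ᵀ B a⁽ˢ⁾. -/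
open MvPolynomial

/-- The action of `σ ∈ GL_n(ℝ)` on real polynomials, `(σ · p)(x) = p(σ⁻¹ x)`,
given by substituting `X i ↦ ∑ j (σ⁻¹)_{i j} X j`. -/
noncomputable def polyAct {n : ℕ} (σ : Matrix.GeneralLinearGroup (Fin n) ℝ) :
    MvPolynomial (Fin n) ℝ →ₐ[ℝ] MvPolynomial (Fin n) ℝ :=
  aeval fun i => ∑ j, (σ⁻¹).val i j • X j

/-- The subalgebra `ℝ[X]^G` of `G`-invariant polynomials. -/
noncomputable def invariants {n : ℕ} (G : Subgroup (Matrix.GeneralLinearGroup (Fin n) ℝ)) :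
    Subalgebra ℝ (MvPolynomial (Fin n) ℝ) where
  carrier := {p | ∀ σ ∈ G, polyAct σ p = p}
  mul_mem' := fun hp hq σ hσ => by rw [map_mul, hp σ hσ, hq σ hσ]
  one_mem' := fun σ _ => map_one (polyAct σ)
  add_mem' := fun hp hq σ hσ => by rw [map_add, hp σ hσ, hq σ hσ]
  zero_mem' := fun σ _ => map_zero (polyAct σ)
  algebraMap_mem' := fun r σ _ => (polyAct σ).commutes r

/-- The Reynolds operator `R_H(p) = (1/|H|) ∑_{σ ∈ H} σ · p` of a (finite) subgroup `H`. -/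
noncomputable def reynolds {n : ℕ} (H : Subgroup (Matrix.GeneralLinearGroup (Fin n) ℝ))
    (p : MvPolynomial (Fin n) ℝ) : MvPolynomial (Fin n) ℝ :=
  (Nat.card H : ℝ)⁻¹ • ∑ᶠ σ ∈ (H : Set (Matrix.GeneralLinearGroup (Fin n) ℝ)), polyAct σ p

section Aux
variable {n : ℕ} (G : Subgroup (Matrix.GeneralLinearGroup (Fin n) ℝ)) [Fintype G]

lemma reynolds_eq (p : MvPolynomial (Fin n) ℝ) :
    reynolds G p = (Nat.card G : ℝ)⁻¹ • ∑ σ : G, polyAct σ.1 p := by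
  unfold reynolds
  congr 1
  have h : (G : Set (Matrix.GeneralLinearGroup (Fin n) ℝ))
      = ((Set.toFinite (G : Set (Matrix.GeneralLinearGroup (Fin n) ℝ))).toFinset : Set _) := by
    simp
  rw [h, finsum_mem_coe_finset]
  exact Finset.sum_subtype _ (fun x => by simp) _

lemma card_G_pos : (0 : ℝ) < (Nat.card G : ℝ) := by
  exact_mod_cast Nat.card_pos

lemma reynolds_of_mem {f : MvPolynomial (Fin n) ℝ} (hf : f ∈ invariants G) :
    reynolds G f = f := by
  rw [reynolds_eq]
  have : ∀ σ : G, polyAct σ.1 f = f := fun σ => hf σ.1 σ.2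
  simp only [this, Finset.sum_const, Finset.card_univ]
  rw [← Nat.card_eq_fintype_card, ← Nat.cast_smul_eq_nsmul ℝ, smul_smul,
    inv_mul_cancel₀ (card_G_pos G).ne', one_smul]

lemma reynolds_mul_left {a : MvPolynomial (Fin n) ℝ} (ha : a ∈ invariants G)
    (p : MvPolynomial (Fin n) ℝ) : reynolds G (a * p) = a * reynolds G p := by
  rw [reynolds_eq, reynolds_eq]
  simp only [map_mul, fun σ : G => ha σ.1 σ.2]
  rw [← Finset.mul_sum, mul_smul_comm]

lemma reynolds_sum {ι : Type*} (s : Finset ι) (p : ι → MvPolynomial (Fin n) ℝ) :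
    reynolds G (∑ i ∈ s, p i) = ∑ i ∈ s, reynolds G (p i) := by
  simp only [reynolds_eq, map_sum, Finset.smul_sum]
  rw [Finset.sum_comm]

end Aux


/-- if `b₁,…,b_l` generate `ℝ[X]` as a module over `ℝ[X]^G` and
`B_{ij} = R_G(b_i b_j)`, then `f ∈ ℝ[X]^G` is a sum of squares of polynomials iff
`f = ∑_s (a⁽ˢ⁾)ᵀ B a⁽ˢ⁾` for finitely many vectors `a⁽ˢ⁾` with invariant entries. -/
theorem statement_1 {n l : ℕ} (G : Subgroup (Matrix.GeneralLinearGroup (Fin n) ℝ)) [Finite G]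
    (b : Fin l → MvPolynomial (Fin n) ℝ)
    (hb : ∀ p : MvPolynomial (Fin n) ℝ, ∃ a : Fin l → MvPolynomial (Fin n) ℝ,
      (∀ i, a i ∈ invariants G) ∧ p = ∑ i, a i * b i)
    (f : MvPolynomial (Fin n) ℝ) (hf : f ∈ invariants G) :
    (∃ (m : ℕ) (g : Fin m → MvPolynomial (Fin n) ℝ), f = ∑ s, (g s) ^ 2) ↔
      (∃ (t : ℕ) (a : Fin t → Fin l → MvPolynomial (Fin n) ℝ),
        (∀ s i, a s i ∈ invariants G) ∧
        f = ∑ s, ∑ i, ∑ j, a s i * reynolds G (b i * b j) * a s j) := by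
  haveI : Fintype G := Fintype.ofFinite G
  -- key identity: for invariant coefficients a, R((∑ a_i b_i)^2) = ∑∑ a_i R(b_i b_j) a_j
  have key : ∀ (a : Fin l → MvPolynomial (Fin n) ℝ), (∀ i, a i ∈ invariants G) →
      reynolds G ((∑ i, a i * b i) ^ 2)
        = ∑ i, ∑ j, a i * reynolds G (b i * b j) * a j := by
    intro a ha
    have expand : (∑ i, a i * b i) ^ 2 = ∑ i, ∑ j, (a i * a j) * (b i * b j) := by
      rw [sq, Finset.sum_mul_sum]
      apply Finset.sum_congr rfl; intro i _
      apply Finset.sum_congr rfl; intro j _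
      ring
    rw [expand, reynolds_sum]
    apply Finset.sum_congr rfl; intro i _
    rw [reynolds_sum]
    apply Finset.sum_congr rfl; intro j _
    rw [reynolds_mul_left G (mul_mem (ha i) (ha j))]
    ring
  constructor
  · rintro ⟨m, g, rfl⟩
    choose a ha hg using fun s => hb (g s)
    refine ⟨m, a, fun s i => ha s i, ?_⟩
    calc ∑ s, g s ^ 2 = reynolds G (∑ s, g s ^ 2) := (reynolds_of_mem G hf).symm
      _ = ∑ s, reynolds G (g s ^ 2) := reynolds_sum G _ _
      _ = ∑ s, ∑ i, ∑ j, a s i * reynolds G (b i * b j) * a s j := by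
          refine Finset.sum_congr rfl fun s _ => ?_
          rw [hg s]
          exact key (a s) (ha s)
  · rintro ⟨t, a, ha, hfa⟩
    set q : Fin t → MvPolynomial (Fin n) ℝ := fun s => ∑ i, a s i * b i with hq
    have hf2 : f = ∑ s, reynolds G ((q s) ^ 2) := by
      rw [hfa]
      exact Finset.sum_congr rfl fun s _ => (key (a s) (ha s)).symm
    -- R(p^2) as sum of squares
    set d : ℝ := Real.sqrt (Nat.card G : ℝ)⁻¹ with hd
    have hd2 : d ^ 2 = (Nat.card G : ℝ)⁻¹ :=
      Real.sq_sqrt (inv_nonneg.mpr (card_G_pos G).le)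
    have hsq : ∀ p : MvPolynomial (Fin n) ℝ,
        reynolds G (p ^ 2) = ∑ σ : G, (C d * polyAct σ.1 p) ^ 2 := by
      intro p
      rw [reynolds_eq]
      rw [Finset.smul_sum]
      apply Finset.sum_congr rfl; intro σ _
      rw [map_pow, mul_pow, ← C_pow, hd2]
      rw [smul_eq_C_mul]
    let e := Fintype.equivFin (Fin t × G)
    refine ⟨Fintype.card (Fin t × G),
      fun k => C d * polyAct ((e.symm k).2 : Matrix.GeneralLinearGroup (Fin n) ℝ) (q (e.symm k).1), ?_⟩
    calc f = ∑ s, reynolds G ((q s) ^ 2) := hf2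
      _ = ∑ z : Fin t × G, (C d * polyAct (z.2 : Matrix.GeneralLinearGroup (Fin n) ℝ) (q z.1)) ^ 2 := by
          rw [Fintype.sum_prod_type]
          exact Finset.sum_congr rfl fun s _ => hsq (q s)
      _ = ∑ k, (C d * polyAct (((e.symm k).2 : G) : Matrix.GeneralLinearGroup (Fin n) ℝ) (q (e.symm k).1)) ^ 2 :=
          Fintype.sum_equiv e _ _ (fun z => by simp)
end

section
/- Let G be a finite subgroup of GL_n(ℝ) and let x ∈ ℂⁿ \ ℝⁿ be a point such that f(x) ∈ ℝ for every f ∈ ℝ[X]^G. Then there exists a polynomial f ∈ ℝ[X]^G which is a sum of squares of polynomials in ℝ[X] and satisfies f(x) < 0 (the value f(x) being real by assumption). -/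
open MvPolynomial

lemma sep {n : ℕ} {z x x' : Fin n → ℂ} (h1 : z ≠ x) (h2 : z ≠ x') :
    ∃ ℓ : MvPolynomial (Fin n) ℂ, eval z ℓ = 0 ∧ eval x ℓ ≠ 0 ∧ eval x' ℓ ≠ 0 := by
  obtain ⟨k, hk⟩ := Function.ne_iff.1 h1
  obtain ⟨k', hk'⟩ := Function.ne_iff.1 h2
  set A := x k - z k with hA'
  set B := x k' - z k' with hB'
  set Cc := x' k - z k with hC'
  set D := x' k' - z k' with hD'
  have hA : A ≠ 0 := sub_ne_zero.2 (Ne.symm hk)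
  have hD : D ≠ 0 := sub_ne_zero.2 (Ne.symm hk')
  obtain ⟨lam, hlam⟩ := Infinite.exists_notMem_finset ({-A/B, -Cc/D} : Finset ℂ)
  simp only [Finset.mem_insert, Finset.mem_singleton, not_or] at hlam
  refine ⟨(X k - C (z k)) + C lam * (X k' - C (z k')), by simp, ?_, ?_⟩
  · simp only [map_add, map_sub, map_mul, eval_X, eval_C]
    intro h
    by_cases hB : B = 0
    · rw [← hA', ← hB', hB] at h; simp only [mul_zero, add_zero] at h; exact hA h
    · apply hlam.1
      rw [← hA', ← hB'] at h
      field_simp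
      linear_combination h
  · simp only [map_add, map_sub, map_mul, eval_X, eval_C]
    intro h
    apply hlam.2
    rw [← hC', ← hD'] at h
    field_simp
    linear_combination h

lemma vanish {n : ℕ} (F : Finset (Fin n → ℂ)) (x x' : Fin n → ℂ) (hx : x ∉ F) (hx' : x' ∉ F) :
    ∃ W : MvPolynomial (Fin n) ℂ, (∀ z ∈ F, eval z W = 0) ∧ eval x W ≠ 0 ∧ eval x' W ≠ 0 := by
  classical
  induction F using Finset.induction_on with
  | empty => exact ⟨1, by simp, by simp, by simp⟩
  | @insert a s ha ih =>
    have hxa : a ≠ x := fun h => hx (h ▸ Finset.mem_insert_self a s)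
    have hxa' : a ≠ x' := fun h => hx' (h ▸ Finset.mem_insert_self a s)
    obtain ⟨ℓ, hℓa, hℓx, hℓx'⟩ := sep hxa hxa'
    obtain ⟨W₀, hW₀, hW₀x, hW₀x'⟩ := ih (fun h => hx (Finset.mem_insert_of_mem h))
      (fun h => hx' (Finset.mem_insert_of_mem h))
    refine ⟨ℓ * W₀, ?_, by simp [hℓx, hW₀x], by simp [hℓx', hW₀x']⟩
    intro z hz
    rcases Finset.mem_insert.1 hz with h | h
    · simp [h, hℓa]
    · simp [hW₀ z h]

lemma eval_map_conj {n : ℕ} (W : MvPolynomial (Fin n) ℂ) (z : Fin n → ℂ) :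
    eval z (map (starRingEnd ℂ) W) =
      starRingEnd ℂ (eval (fun i => starRingEnd ℂ (z i)) W) := by
  induction W using MvPolynomial.induction_on with
  | C a => simp
  | add p q hp hq => simp [hp, hq]
  | mul_X p i hp => simp [hp]

lemma exists_real_lift {n : ℕ} (p : MvPolynomial (Fin n) ℂ)
    (h : map (starRingEnd ℂ) p = p) :
    ∃ q : MvPolynomial (Fin n) ℝ, map (algebraMap ℝ ℂ) q = p := by
  refine ⟨∑ m ∈ p.support, monomial m ((coeff m p).re), ?_⟩
  have hc : ∀ m, (((coeff m p).re : ℝ) : ℂ) = coeff m p := by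
    intro m
    have := congrArg (coeff m) h
    rw [coeff_map] at this
    exact Complex.conj_eq_iff_re.1 this
  rw [map_sum]
  simp only [map_monomial]
  simp only [Complex.coe_algebraMap, hc]
  exact support_sum_monomial_coeff p

lemma aeval_conj {n : ℕ} (q : MvPolynomial (Fin n) ℝ) (z : Fin n → ℂ) :
    aeval (fun i => starRingEnd ℂ (z i)) q = starRingEnd ℂ (aeval z q) := by
  induction q using MvPolynomial.induction_on with
  | C a => simp
  | add p q hp hq => simp [hp, hq]
  | mul_X p i hp => simp [hp]

lemma polyAct_mul {n : ℕ} (τ σ : Matrix.GeneralLinearGroup (Fin n) ℝ)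
    (p : MvPolynomial (Fin n) ℝ) :
    polyAct τ (polyAct σ p) = polyAct (τ * σ) p := by
  have h : (polyAct τ).comp (polyAct σ) = polyAct (τ * σ) := by
    apply MvPolynomial.algHom_ext
    intro i
    simp only [AlgHom.comp_apply, polyAct, aeval_X, map_sum, map_smul]
    rw [mul_inv_rev]
    simp only [Units.val_mul, Matrix.mul_apply, Finset.smul_sum, smul_smul,
      Finset.sum_smul]
    exact Finset.sum_comm
  exact DFunLike.congr_fun h p

lemma aeval_polyAct {n : ℕ} (σ : Matrix.GeneralLinearGroup (Fin n) ℝ)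
    (x : Fin n → ℂ) (p : MvPolynomial (Fin n) ℝ) :
    aeval x (polyAct σ p)
      = aeval (fun i => ∑ j, ((σ⁻¹).val i j : ℂ) * x j) p := by
  have h : ((aeval x : MvPolynomial (Fin n) ℝ →ₐ[ℝ] ℂ)).comp (polyAct σ)
      = aeval (fun i => ∑ j, ((σ⁻¹).val i j : ℂ) * x j) := by
    apply MvPolynomial.algHom_ext
    intro i
    simp [polyAct, aeval_X, Algebra.smul_def]
  exact DFunLike.congr_fun h p

/-- if `x ∈ ℂⁿ \ ℝⁿ` is such that every `G`-invariant polynomial takes a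
real value at `x`, then some `G`-invariant sum of squares `f` satisfies `f(x) < 0`. -/
theorem statement_2 {n : ℕ} (G : Subgroup (Matrix.GeneralLinearGroup (Fin n) ℝ)) [Finite G]
    (x : Fin n → ℂ) (hx : ¬ ∀ i, (x i).im = 0)
    (hreal : ∀ f ∈ invariants G, (aeval x f).im = 0) :
    ∃ f ∈ invariants G,
      (∃ (m : ℕ) (g : Fin m → MvPolynomial (Fin n) ℝ), f = ∑ s, (g s) ^ 2) ∧
      (aeval x f).re < 0 := by
  classical
  obtain ⟨i₀, hi₀⟩ := not_forall.1 hx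
  haveI : Fintype G := Fintype.ofFinite G
  set xb : Fin n → ℂ := fun i => starRingEnd ℂ (x i) with hxbdef
  set y : G → (Fin n → ℂ) :=
    fun σ i => ∑ j, (((σ : Matrix.GeneralLinearGroup (Fin n) ℝ)⁻¹).val i j : ℂ) * x j
    with hydef
  have hy1 : y 1 = x := by
    funext i
    simp [hydef, Matrix.one_apply, apply_ite (fun r : ℝ => (r : ℂ))]
  set F : Finset (Fin n → ℂ) := (Finset.univ.image y) \ {x, xb} with hFdef
  have hxF : x ∉ F := by simp [hFdef]
  have hxbF : xb ∉ F := by simp [hFdef]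
  obtain ⟨W, hWF, hWx, hWxb⟩ := vanish F x xb hxF hxbF
  set P : MvPolynomial (Fin n) ℂ := W * map (starRingEnd ℂ) W with hPdef
  have hPconj : map (starRingEnd ℂ) P = P := by
    rw [hPdef, map_mul, map_map]
    have hcc : (starRingEnd ℂ).comp (starRingEnd ℂ) = RingHom.id ℂ :=
      RingHom.ext fun z => Complex.conj_conj z
    rw [hcc, map_id, mul_comm]
  obtain ⟨P₀, hP₀⟩ := exists_real_lift P hPconj
  have haev : ∀ (Q : MvPolynomial (Fin n) ℝ) (z : Fin n → ℂ),
      aeval z Q = eval z (map (algebraMap ℝ ℂ) Q) := fun Q z => by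
    rw [aeval_def, eval₂_eq_eval_map]
  set w : ℂ := eval x P with hwdef
  have hw0 : w ≠ 0 := by
    rw [hwdef, hPdef, map_mul]
    apply mul_ne_zero hWx
    rw [eval_map_conj]
    simpa using hWxb
  have hPF : ∀ z ∈ F, eval z P = 0 := fun z hz => by
    rw [hPdef, map_mul, hWF z hz, zero_mul]
  set β : ℝ := ∑ k, ((x k).im)^2 with hβdef
  have hβ : 0 < β :=
    Finset.sum_pos' (fun k _ => sq_nonneg _) ⟨i₀, Finset.mem_univ _, by positivity⟩
  set L : MvPolynomial (Fin n) ℝ := ∑ k, C ((x k).im) * (X k - C ((x k).re)) with hLdef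
  have hLx : aeval x L = (β : ℝ) * Complex.I := by
    rw [hLdef, map_sum, hβdef]
    push_cast [Finset.sum_mul]
    apply Finset.sum_congr rfl
    intro k _
    simp only [map_mul, map_sub, aeval_X, aeval_C, Complex.coe_algebraMap]
    linear_combination (-((x k).im : ℂ)) * (Complex.re_add_im (x k))
  set q : MvPolynomial (Fin n) ℝ := L * (C (-(2 * w.re)) * P₀ + P₀ * P₀) with hqdef
  have hP₀x : aeval x P₀ = w := by rw [haev, hP₀, hwdef]
  have hqx : aeval x q = (β : ℝ) * Complex.I * (-(Complex.normSq w : ℝ)) := by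
    rw [hqdef, map_mul, map_add, map_mul, map_mul, aeval_C, hP₀x, hLx]
    congr 1
    have h1 := Complex.mul_conj w
    have h2 := Complex.add_conj w
    simp only [Complex.coe_algebraMap]
    push_cast at h1 h2 ⊢
    linear_combination w * h2 - h1
  have hqF : ∀ z ∈ F, aeval z q = 0 := by
    intro z hz
    have hz' : aeval z P₀ = 0 := by rw [haev, hP₀, hPF z hz]
    rw [hqdef, map_mul, map_add, map_mul, map_mul, hz']
    ring
  set c : ℝ := β * Complex.normSq w with hcdef
  have hc0 : 0 < c := mul_pos hβ (Complex.normSq_pos.2 hw0)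
  have hqx2 : aeval x (q^2) = ((-(c^2) : ℝ) : ℂ) := by
    rw [map_pow, hqx, hcdef]
    push_cast
    linear_combination ((β:ℂ)^2 * ((Complex.normSq w : ℝ):ℂ)^2) * Complex.I_sq
  set t : G → ℂ := fun σ => aeval (y σ) (q^2) with htdef
  have htx : ∀ σ, y σ = x → t σ = ((-(c^2) : ℝ) : ℂ) := by
    intro σ h
    rw [htdef]
    simp only
    rw [h, hqx2]
  have htxb : ∀ σ, y σ = xb → t σ = ((-(c^2) : ℝ) : ℂ) := by
    intro σ h
    rw [htdef]
    simp only
    rw [h, hxbdef]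
    rw [show (fun i => starRingEnd ℂ (x i)) = fun i => starRingEnd ℂ (x i) from rfl]
    rw [aeval_conj (q^2) x, hqx2, Complex.conj_ofReal]
  have htF : ∀ σ, y σ ≠ x → y σ ≠ xb → t σ = 0 := by
    intro σ h1 h2
    have hmem : y σ ∈ F := by
      rw [hFdef]
      simp only [Finset.mem_sdiff, Finset.mem_image, Finset.mem_univ, true_and,
        Finset.mem_insert, Finset.mem_singleton, not_or]
      exact ⟨⟨σ, rfl⟩, h1, h2⟩
    rw [htdef]
    simp only
    rw [map_pow, hqF _ hmem]
    ring
  have hterm : ∀ σ : G, aeval x (polyAct (σ : Matrix.GeneralLinearGroup (Fin n) ℝ) (q^2)) = t σ := by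
    intro σ
    rw [aeval_polyAct]
  refine ⟨∑ σ : G, polyAct (σ : Matrix.GeneralLinearGroup (Fin n) ℝ) (q^2), ?_, ?_, ?_⟩
  · intro τ hτ
    rw [map_sum]
    calc ∑ σ : G, polyAct τ (polyAct (σ : Matrix.GeneralLinearGroup (Fin n) ℝ) (q^2))
        = ∑ σ : G, polyAct (((⟨τ, hτ⟩ : G) * σ : G) : Matrix.GeneralLinearGroup (Fin n) ℝ) (q^2) := by
          apply Finset.sum_congr rfl
          intro σ _
          rw [polyAct_mul]
          norm_cast
      _ = ∑ σ : G, polyAct (σ : Matrix.GeneralLinearGroup (Fin n) ℝ) (q^2) :=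
          Equiv.sum_comp (Equiv.mulLeft (⟨τ, hτ⟩ : G))
            (fun σ : G => polyAct (σ : Matrix.GeneralLinearGroup (Fin n) ℝ) (q^2))
  · refine ⟨Fintype.card G,
      fun s => polyAct (((Fintype.equivFin G).symm s : G) : Matrix.GeneralLinearGroup (Fin n) ℝ) q, ?_⟩
    have step1 : ∑ σ : G, polyAct (σ : Matrix.GeneralLinearGroup (Fin n) ℝ) (q^2)
        = ∑ σ : G, (polyAct (σ : Matrix.GeneralLinearGroup (Fin n) ℝ) q)^2 :=
      Finset.sum_congr rfl (fun σ _ => map_pow _ _ _)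
    rw [step1]
    exact (Equiv.sum_comp (Fintype.equivFin G).symm
      (fun σ : G => (polyAct (σ : Matrix.GeneralLinearGroup (Fin n) ℝ) q)^2)).symm
  · rw [map_sum]
    rw [Finset.sum_congr rfl (fun σ _ => hterm σ)]
    rw [Complex.re_sum]
    have hlt : ∑ σ : G, (t σ).re < ∑ _σ : G, (0:ℝ) := by
      apply Finset.sum_lt_sum
      · intro σ _
        by_cases h1 : y σ = x
        · rw [htx σ h1]; simp only [Complex.ofReal_re]; nlinarith [sq_nonneg c]
        · by_cases h2 : y σ = xb
          · rw [htxb σ h2]; simp only [Complex.ofReal_re]; nlinarith [sq_nonneg c]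
          · rw [htF σ h1 h2]; simp
      · refine ⟨1, Finset.mem_univ _, ?_⟩
        rw [htx 1 hy1]
        simp only [Complex.ofReal_re]
        have : (0:ℝ) < c^2 := by positivity
        linarith
    rwa [Finset.sum_const_zero] at hlt
end

section
/- Let C₄ be the cyclic group generated by the 4-cycle (1 2 3 4), acting on ℝ[X₁,X₂,X₃,X₄] by permuting the variables and on ℂ⁴ by permuting the coordinates. There is NO polynomial f ∈ ℝ[X₁,…,X₄]^{C₄} with the following property: for every x ∈ ℂ⁴ such that g(x) ∈ ℝ for all g ∈ ℝ[X₁,…,X₄]^{C₄}, one has Re(f(x)) ≥ 0 if and only if σ·x ∈ ℝ⁴ for some σ ∈ C₄. (In other words, the orbit space ℝ⁴/C₄ cannot be described by a single invariant inequality f ≥ 0.) -/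
open MvPolynomial

/-- If `conj ∘ x = x ∘ τ` and `g` is `τ`-invariant, then `g(x)` is real. -/
lemma aux_real_inv (τ : Equiv.Perm (Fin 4)) (x : Fin 4 → ℂ)
    (hx : ∀ i, (starRingEnd ℂ) (x i) = x (τ i))
    (g : MvPolynomial (Fin 4) ℝ) (hg : rename (⇑τ) g = g) :
    (aeval x g).im = 0 := by
  have h1 : (starRingEnd ℂ) (aeval x g) = aeval x g := by
    have h2 : (starRingEnd ℂ) (aeval x g)
        = aeval (fun i => Complex.conjAe (x i)) g :=
      comp_aeval_apply x Complex.conjAe.toAlgHom g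
    rw [h2]
    have h3 : (fun i => Complex.conjAe (x i)) = x ∘ ⇑τ := by
      funext i; exact hx i
    rw [h3, ← aeval_rename, hg]
  exact Complex.conj_eq_iff_im.mp h1

/-- for `C₄` (generated by the 4-cycle) acting on `ℝ[X₁,…,X₄]` by permuting
variables and on `ℂ⁴` by permuting coordinates, there is no invariant polynomial `f` such
that, for every `x ∈ ℂ⁴` at which all invariants are real, `Re(f(x)) ≥ 0` iff some
`σ ∈ C₄` moves `x` into `ℝ⁴`. -/
theorem statement_9 :
    ¬ ∃ f : MvPolynomial (Fin 4) ℝ,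
      (∀ σ ∈ Subgroup.zpowers (finRotate 4), rename (⇑σ) f = f) ∧
      ∀ x : Fin 4 → ℂ,
        (∀ g : MvPolynomial (Fin 4) ℝ,
          (∀ σ ∈ Subgroup.zpowers (finRotate 4), rename (⇑σ) g = g) →
          (aeval x g).im = 0) →
        (0 ≤ (aeval x f).re ↔
          ∃ σ ∈ Subgroup.zpowers (finRotate 4), ∀ i, (x (σ i)).im = 0) := by
  rintro ⟨f, hinv, hmain⟩
  -- membership facts
  have hmem1 : finRotate 4 ∈ Subgroup.zpowers (finRotate 4) := Subgroup.mem_zpowers _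
  have hmem2 : (finRotate 4) ^ 2 ∈ Subgroup.zpowers (finRotate 4) :=
    Subgroup.pow_mem _ hmem1 2
  -- Family B: x_B s t = (s, -s+2ti, s, -s-2ti), invariants real via σ².
  set xB : ℝ → ℝ → Fin 4 → ℂ := fun s t =>
    ![(s : ℂ), -s + 2 * t * Complex.I, s, -s - 2 * t * Complex.I] with hxB
  have hxBreal : ∀ s t, ∀ g : MvPolynomial (Fin 4) ℝ,
      (∀ σ ∈ Subgroup.zpowers (finRotate 4), rename (⇑σ) g = g) →
      (aeval (xB s t) g).im = 0 := by
    intro s t g hg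
    refine aux_real_inv ((finRotate 4) ^ 2) (xB s t) ?_ g (hg _ hmem2)
    intro i
    fin_cases i <;>
      simp [hxB, map_add, map_sub, map_mul, map_ofNat, Complex.conj_ofReal, show ((finRotate 4) ^ 2) 0 = 2 from by decide,
        show ((finRotate 4) ^ 2) 1 = 3 from by decide,
        show ((finRotate 4) ^ 2) 2 = 0 from by decide,
        show ((finRotate 4) ^ 2) 3 = 1 from by decide] <;> ring
  -- Step 1: strict negativity for t ≠ 0
  have hneg : ∀ s t : ℝ, t ≠ 0 → (aeval (xB s t) f).re < 0 := by
    intro s t ht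
    have h := (hmain (xB s t) (hxBreal s t)).not
    rw [not_le] at h
    apply h.mpr
    rintro ⟨σ', hσ', hall⟩
    have h1 := hall (σ'⁻¹ 1)
    rw [show σ' (σ'⁻¹ 1) = 1 from σ'.apply_symm_apply 1] at h1
    simp [hxB] at h1
    exact ht h1
  -- Polynomial in t for fixed s, for continuity
  have hcont : ∀ s : ℝ, (aeval (xB s 0) f).re ≤ 0 := by
    intro s
    set q : Fin 4 → Polynomial ℂ :=
      ![Polynomial.C (s : ℂ), Polynomial.C (-(s:ℂ)) + Polynomial.C (2 * Complex.I) * Polynomial.X,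
        Polynomial.C (s : ℂ), Polynomial.C (-(s:ℂ)) - Polynomial.C (2 * Complex.I) * Polynomial.X] with hq
    set Q : Polynomial ℂ := aeval q f with hQ
    have heval : ∀ t : ℝ, Q.eval (t : ℂ) = aeval (xB s t) f := by
      intro t
      have h2 : (Polynomial.aeval (t : ℂ) : Polynomial ℂ →ₐ[ℂ] ℂ).restrictScalars ℝ (aeval q f)
          = aeval (fun i => Polynomial.aeval (t : ℂ) (q i)) f :=
        comp_aeval_apply _ _ f
      have h3 : (fun i => Polynomial.eval (t : ℂ) (q i)) = xB s t := by
        funext i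
        fin_cases i <;> simp [hq, hxB] <;> ring
      simpa [hQ, h3] using h2
    have hC : Continuous fun t : ℝ => (Q.eval (t : ℂ)).re :=
      Complex.continuous_re.comp (Q.continuous.comp Complex.continuous_ofReal)
    have htend : Filter.Tendsto (fun t : ℝ => (Q.eval (t : ℂ)).re)
        (nhdsWithin 0 {0}ᶜ) (nhds ((Q.eval ((0:ℝ) : ℂ)).re)) :=
      (hC.tendsto 0).mono_left nhdsWithin_le_nhds
    have hle : (Q.eval ((0:ℝ) : ℂ)).re ≤ 0 := by
      refine le_of_tendsto htend ?_
      refine eventually_nhdsWithin_of_forall ?_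
      intro t ht
      rw [heval t]
      exact (hneg s t ht).le
    rwa [heval 0] at hle
  -- Step 3: nonnegativity at real points (s, -s, s, -s), hence value is 0 there
  have hzero : ∀ s : ℝ, aeval (xB s 0) f = 0 := by
    intro s
    have hre : 0 ≤ (aeval (xB s 0) f).re := by
      refine (hmain (xB s 0) (hxBreal s 0)).mpr ?_
      refine ⟨1, Subgroup.one_mem _, ?_⟩
      intro i
      fin_cases i <;> simp [hxB]
    have him : (aeval (xB s 0) f).im = 0 := hxBreal s 0 f hinv
    have : (aeval (xB s 0) f).re = 0 := le_antisymm (hcont s) hre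
    exact Complex.ext this him
  -- Step 4: the one-variable polynomial P(T) = f(T, -T, T, -T) is zero
  set p : Fin 4 → Polynomial ℂ :=
    ![Polynomial.X, -Polynomial.X, Polynomial.X, -Polynomial.X] with hp
  set P : Polynomial ℂ := aeval p f with hP
  have hPeval : ∀ z : ℂ, P.eval z = aeval ![z, -z, z, -z] f := by
    intro z
    have h2 : (Polynomial.aeval z : Polynomial ℂ →ₐ[ℂ] ℂ).restrictScalars ℝ (aeval p f)
        = aeval (fun i => Polynomial.aeval z (p i)) f :=
      comp_aeval_apply _ _ f
    have h3 : (fun i => Polynomial.eval z (p i)) = ![z, -z, z, -z] := by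
      funext i; fin_cases i <;> simp [hp]
    simpa [hP, h3] using h2
  have hP0 : P = 0 := by
    apply Polynomial.eq_zero_of_infinite_isRoot
    apply Set.Infinite.mono (s := Set.range (fun s : ℝ => (s : ℂ)))
    · rintro _ ⟨s, rfl⟩
      show P.IsRoot _
      have hx0 : xB s 0 = ![(s:ℂ), -s, s, -s] := by
        funext i; fin_cases i <;> simp [hxB] <;> ring
      rw [Polynomial.IsRoot, hPeval]
      rw [← hx0, hzero s]
    · exact Set.infinite_range_of_injective Complex.ofReal_injective
  -- Step 5: evaluate at the V₁ point (i, -i, i, -i)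
  set xA : Fin 4 → ℂ := ![Complex.I, -Complex.I, Complex.I, -Complex.I] with hxA
  have hxAval : aeval xA f = 0 := by
    have := hPeval Complex.I
    rw [hP0] at this
    simp at this
    rw [hxA]
    exact this.symm
  have hxAreal : ∀ g : MvPolynomial (Fin 4) ℝ,
      (∀ σ ∈ Subgroup.zpowers (finRotate 4), rename (⇑σ) g = g) →
      (aeval xA g).im = 0 := by
    intro g hg
    refine aux_real_inv (finRotate 4) xA ?_ g (hg _ hmem1)
    intro i
    fin_cases i <;>
      simp [hxA, show (finRotate 4) 0 = 1 from by decide,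
        show (finRotate 4) 1 = 2 from by decide,
        show (finRotate 4) 2 = 3 from by decide,
        show (finRotate 4) 3 = 0 from by decide]
  have hge : 0 ≤ (aeval xA f).re := by rw [hxAval]; simp
  obtain ⟨σ', hσ', hall⟩ := (hmain xA hxAreal).mp hge
  have h1 := hall (σ'⁻¹ 0)
  rw [show σ' (σ'⁻¹ 0) = 0 from σ'.apply_symm_apply 0] at h1
  simp [hxA] at h1
end

section
/- Let G be a finite group and let σ, τ ∈ G be involutions (elements of order exactly 2). Then either σ and τ are conjugate in G, or there exists an involution ρ ∈ G that commutes with both σ and τ. -/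
/-- in a finite group, two involutions are either conjugate, or there is an
involution commuting with both. -/
theorem statement_11 {G : Type*} [Group G] [Finite G] (σ τ : G)
    (hσ : orderOf σ = 2) (hτ : orderOf τ = 2) :
    (∃ g : G, g * σ * g⁻¹ = τ) ∨
    (∃ ρ : G, orderOf ρ = 2 ∧ ρ * σ = σ * ρ ∧ ρ * τ = τ * ρ) := by
  have hσ2 : σ * σ = 1 := by
    have := pow_orderOf_eq_one σ; rwa [hσ, pow_two] at this
  have hτ2 : τ * τ = 1 := by
    have := pow_orderOf_eq_one τ; rwa [hτ, pow_two] at this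
  have hσinv : σ⁻¹ = σ := by
    rw [inv_eq_iff_mul_eq_one]; exact hσ2
  have hτinv : τ⁻¹ = τ := by
    rw [inv_eq_iff_mul_eq_one]; exact hτ2
  set δ := σ * τ with hδ
  have hσδ : σ * δ * σ⁻¹ = δ⁻¹ := by
    rw [hδ, hσinv, mul_inv_rev, hτinv, hσinv,
      show σ * (σ * τ) * σ = (σ * σ) * (τ * σ) from by group, hσ2, one_mul]
  have hτδ : τ * δ * τ⁻¹ = δ⁻¹ := by
    rw [hδ, hτinv, mul_inv_rev, hτinv, hσinv,
      show τ * (σ * τ) * τ = (τ * σ) * (τ * τ) from by group, hτ2, mul_one]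
  have hσδk : ∀ k : ℕ, σ * δ ^ k * σ⁻¹ = (δ ^ k)⁻¹ := by
    intro k; rw [← conj_pow, hσδ, inv_pow]
  have hτδk : ∀ k : ℕ, τ * δ ^ k * τ⁻¹ = (δ ^ k)⁻¹ := by
    intro k; rw [← conj_pow, hτδ, inv_pow]
  set n := orderOf δ with hn
  have hnpos : 0 < n := orderOf_pos δ
  have hδn : δ ^ n = 1 := pow_orderOf_eq_one δ
  rcases Nat.even_or_odd n with ⟨m, hm⟩ | ⟨m, hm⟩
  · -- n = m + m even, ρ = δ^m commutes with both
    right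
    have hρinv : (δ ^ m)⁻¹ = δ ^ m := by
      rw [inv_eq_iff_mul_eq_one, ← pow_add, ← hm]; exact hδn
    refine ⟨δ ^ m, ?_, ?_, ?_⟩
    · have hρ2 : (δ ^ m) ^ 2 = 1 := by
        rw [← pow_mul, show m * 2 = n from by omega]; exact hδn
      have hρne : δ ^ m ≠ 1 := by
        intro h
        have hdvd := orderOf_dvd_of_pow_eq_one h
        rw [← hn] at hdvd
        have hmpos : 0 < m := by omega
        have := Nat.le_of_dvd hmpos hdvd
        omega
      haveI : Fact (Nat.Prime 2) := ⟨Nat.prime_two⟩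
      exact orderOf_eq_prime hρ2 hρne
    · have h := hσδk m
      rw [hρinv, mul_inv_eq_iff_eq_mul] at h
      exact h.symm
    · have h := hτδk m
      rw [hρinv, mul_inv_eq_iff_eq_mul] at h
      exact h.symm
  · -- n = 2m + 1 odd, conjugate via δ^m
    left
    refine ⟨δ ^ m, ?_⟩
    have h1 : δ ^ (m + m) = δ⁻¹ := by
      have hmul : δ ^ (m + m) * δ = 1 := by
        rw [← pow_succ, show m + m + 1 = n from by omega]; exact hδn
      exact eq_inv_of_mul_eq_one_left hmul
    calc δ ^ m * σ * (δ ^ m)⁻¹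
        = δ ^ m * σ * (σ * δ ^ m * σ⁻¹) := by rw [hσδk m]
      _ = δ ^ m * (σ * σ) * δ ^ m * σ⁻¹ := by group
      _ = δ ^ m * δ ^ m * σ⁻¹ := by rw [hσ2, mul_one]
      _ = δ ^ (m + m) * σ := by rw [pow_add, hσinv]
      _ = δ⁻¹ * σ := by rw [h1]
      _ = τ := by
          rw [hδ, mul_inv_rev, hσinv, hτinv, mul_assoc, hσ2, mul_one]
end

section
/- Let G be a finite group in which every elementary abelian 2-subgroup has order at most 2 (equivalently, G contains no subgroup isomorphic to the Klein four-group ℤ/2 × ℤ/2). Then any two involutions of G are conjugate in G; in particular, every involution of G generates a broad subgroup of G. -/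
private lemma aux_even {G : Type*} [Group G] [Finite G]
    (hmax : ∀ H : Subgroup G, (∀ h ∈ H, h ^ 2 = 1) → Nat.card H ≤ 2)
    (σ x : G) (hσ2 : σ * σ = 1) (hσ1 : σ ≠ 1)
    (hrel : σ * x * σ⁻¹ = x⁻¹) (heven : 2 ∣ orderOf x) :
    σ = x ^ (orderOf x / 2) := by
  set n := orderOf x with hn
  have hnpos : 0 < n := orderOf_pos x
  have hn2 : 2 ≤ n := Nat.le_of_dvd hnpos heven
  set z := x ^ (n / 2) with hzdef
  have hzz : z * z = 1 := by
    rw [hzdef, ← pow_add]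
    have : n / 2 + n / 2 = n := by omega
    rw [this, hn, pow_orderOf_eq_one]
  have hz1 : z ≠ 1 := by
    intro h
    have hdvd : n ∣ n / 2 := orderOf_dvd_of_pow_eq_one h
    have : n ≤ n / 2 := Nat.le_of_dvd (by omega) hdvd
    omega
  have hzinv : z⁻¹ = z := inv_eq_of_mul_eq_one_right hzz
  have hσinv : σ⁻¹ = σ := inv_eq_of_mul_eq_one_right hσ2
  have hconj : σ * z * σ⁻¹ = z := by
    have : σ * z * σ⁻¹ = (σ * x * σ⁻¹) ^ (n / 2) := by
      rw [hzdef, conj_pow]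
    rw [this, hrel, inv_pow, ← hzdef, hzinv]
  have hcomm : σ * z = z * σ := by
    have := hconj
    rw [hσinv] at this
    calc σ * z = σ * z * σ * σ := by rw [mul_assoc, hσ2, mul_one]
    _ = z * σ := by rw [this]
  by_contra hne
  -- build the Klein four subgroup
  have hσz1 : σ * z ≠ 1 := fun h => hne (by
    have : z = σ⁻¹ := eq_inv_of_mul_eq_one_right h
    rw [this, hσinv])
  have swap : ∀ t : G, z * (σ * t) = σ * (z * t) := by
    intro t; rw [← mul_assoc, ← hcomm, mul_assoc]
  have σcan : ∀ t : G, σ * (σ * t) = t := by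
    intro t; rw [← mul_assoc, hσ2, one_mul]
  have zcan : ∀ t : G, z * (z * t) = t := by
    intro t; rw [← mul_assoc, hzz, one_mul]
  let H : Subgroup G :=
    { carrier := {1, σ, z, σ * z}
      one_mem' := by left; rfl
      mul_mem' := by
        rintro a b (rfl | rfl | rfl | rfl) (rfl | rfl | rfl | rfl) <;>
          simp [Set.mem_insert_iff, Set.mem_singleton_iff, mul_assoc, swap, σcan, zcan,
            hσ2, hzz, ← hcomm]
      inv_mem' := by
        rintro a (rfl | rfl | rfl | rfl) <;>
          simp [Set.mem_insert_iff, Set.mem_singleton_iff, mul_inv_rev, hσinv, hzinv,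
            hcomm] }
  have hsq : ∀ h ∈ H, h ^ 2 = 1 := by
    rintro h (rfl | rfl | rfl | rfl)
    · exact one_pow 2
    · rw [sq]; exact hσ2
    · rw [sq]; exact hzz
    · rw [sq, mul_assoc, ← mul_assoc z σ, ← hcomm, mul_assoc, hzz, mul_one, hσ2]
  have hcard := hmax H hsq
  have hsub : ({1, σ, z} : Set G) ⊆ (H : Set G) := by
    rintro a (rfl | rfl | rfl)
    · exact H.one_mem
    · right; left; rfl
    · right; right; left; rfl
  have h3 : ({1, σ, z} : Set G).ncard = 3 := by
    rw [Set.ncard_insert_of_notMem (by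
      simp only [Set.mem_insert_iff, Set.mem_singleton_iff]
      push_neg
      exact ⟨fun h => hσ1 h.symm, fun h => hz1 h.symm⟩),
      Set.ncard_insert_of_notMem (by simpa using hne), Set.ncard_singleton]
  have hle : ({1, σ, z} : Set G).ncard ≤ (H : Set G).ncard :=
    Set.ncard_le_ncard hsub (Set.toFinite _)
  have : (H : Set G).ncard = Nat.card H := (Nat.card_coe_set_eq _).symm
  omega

private lemma key {G : Type*} [Group G] [Finite G]
    (hmax : ∀ H : Subgroup G, (∀ h ∈ H, h ^ 2 = 1) → Nat.card H ≤ 2)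
    (σ τ : G) (hσ : orderOf σ = 2) (hτ : orderOf τ = 2) :
    ∃ g : G, g * σ * g⁻¹ = τ := by
  have hσ2 : σ * σ = 1 := by have := pow_orderOf_eq_one σ; rwa [hσ, sq] at this
  have hτ2 : τ * τ = 1 := by have := pow_orderOf_eq_one τ; rwa [hτ, sq] at this
  have hσinv : σ⁻¹ = σ := inv_eq_of_mul_eq_one_right hσ2
  have hτinv : τ⁻¹ = τ := inv_eq_of_mul_eq_one_right hτ2
  have hσ1 : σ ≠ 1 := by intro h; rw [h, orderOf_one] at hσ; omega
  have hτ1 : τ ≠ 1 := by intro h; rw [h, orderOf_one] at hτ; omega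
  set x := σ * τ with hx
  have hxinv : x⁻¹ = τ * σ := by rw [hx, mul_inv_rev, hσinv, hτinv]
  have hrelσ : σ * x * σ⁻¹ = x⁻¹ := by
    rw [hx, hxinv, hσinv, ← mul_assoc, hσ2, one_mul]
  have hrelτ : τ * x * τ⁻¹ = x⁻¹ := by
    rw [hx, hxinv, hτinv, mul_assoc, mul_assoc, hτ2, mul_one]
  set n := orderOf x with hn
  have hnpos : 0 < n := orderOf_pos x
  rcases Nat.even_or_odd n with he | ho
  · -- even case: σ = x^(n/2) = τ
    have h1 := aux_even hmax σ x hσ2 hσ1 hrelσ he.two_dvd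
    have h2 := aux_even hmax τ x hτ2 hτ1 hrelτ he.two_dvd
    refine ⟨1, ?_⟩
    simp only [one_mul, inv_one, mul_one]
    rw [h1, ← h2]
  · -- odd case
    set m := (n - 1) / 2 with hm
    have h2m : 2 * m = n - 1 := by
      rcases ho with ⟨k, hk⟩; omega
    refine ⟨x ^ m, ?_⟩
    have hstep : σ * (x ^ m)⁻¹ * σ⁻¹ = x ^ m := by
      have : (σ * x ^ m * σ⁻¹)⁻¹ = σ * (x ^ m)⁻¹ * σ⁻¹ := by
        simp [mul_inv_rev, mul_assoc, hσinv]
      rw [← this, ← conj_pow, hrelσ, inv_pow, inv_inv]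
    calc x ^ m * σ * (x ^ m)⁻¹
        = x ^ m * (σ * (x ^ m)⁻¹ * σ⁻¹) * σ := by
          group
      _ = x ^ m * x ^ m * σ := by rw [hstep]
      _ = x ^ (n - 1) * σ := by rw [← pow_add, ← h2m, two_mul]
      _ = x⁻¹ * σ := by
          have : x ^ n = 1 := by rw [hn]; exact pow_orderOf_eq_one x
          have hh : x ^ (n - 1) * x = 1 := by
            rw [← pow_succ, Nat.sub_add_cancel hnpos, this]
          rw [eq_inv_of_mul_eq_one_left hh]
      _ = τ := by rw [hxinv, mul_assoc, hσ2, mul_one]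

/-- if every elementary abelian 2-subgroup of a finite group `G` has order
at most 2, then any two involutions of `G` are conjugate; in particular, every involution
generates a broad subgroup of `G`. -/
theorem statement_12 {G : Type*} [Group G] [Finite G]
    (hmax : ∀ H : Subgroup G, (∀ h ∈ H, h ^ 2 = 1) → Nat.card H ≤ 2) :
    (∀ σ τ : G, orderOf σ = 2 → orderOf τ = 2 → ∃ g : G, g * σ * g⁻¹ = τ) ∧
    (∀ σ : G, orderOf σ = 2 →
      (∀ h ∈ Subgroup.zpowers σ, h ^ 2 = 1) ∧
      (∀ τ : G, orderOf τ = 2 → ∃ g : G, ∃ h ∈ Subgroup.zpowers σ, g * τ * g⁻¹ = h)) := by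
  refine ⟨fun σ τ hσ hτ => key hmax σ τ hσ hτ, fun σ hσ => ⟨?_, fun τ hτ => ?_⟩⟩
  · rintro h ⟨k, rfl⟩
    have h2 : σ ^ (2 : ℤ) = 1 := by
      have := pow_orderOf_eq_one σ
      rw [hσ] at this
      rw [show (2 : ℤ) = ((2 : ℕ) : ℤ) by norm_num, zpow_natCast, this]
    rw [sq, ← zpow_add, show k + k = 2 * k by ring, zpow_mul, h2, one_zpow]
  · obtain ⟨g, hg⟩ := key hmax τ σ hτ hσ
    exact ⟨g, σ, Subgroup.mem_zpowers σ, hg⟩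
end

section
/- Let G = {1, σ} be a subgroup of GL_n(ℝ) of order 2. Set f_i := X_i − R_G(X_i) for i = 1,…,n and f := ∑_{i=1}^n f_i². Then f ∈ ℝ[X]^G, and a ring homomorphism φ: ℝ[X]^G → ℝ extends to a ring homomorphism ℝ[X] → ℝ if and only if φ(f) ≥ 0. -/
set_option synthInstance.maxHeartbeats 400000
set_option maxHeartbeats 1000000


open MvPolynomial

namespace Stmt14

variable {n : ℕ}

lemma polyAct_X (σ : Matrix.GeneralLinearGroup (Fin n) ℝ) (i : Fin n) :
    polyAct σ (X i) = ∑ j, (σ⁻¹).val i j • X j := aeval_X _ i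

lemma polyAct_one : (polyAct (1 : Matrix.GeneralLinearGroup (Fin n) ℝ)) = AlgHom.id ℝ _ := by
  apply algHom_ext
  intro i
  rw [polyAct_X]
  simp [Matrix.one_apply]

lemma polyAct_mul (σ τ : Matrix.GeneralLinearGroup (Fin n) ℝ) :
    (polyAct σ).comp (polyAct τ) = polyAct (σ * τ) := by
  apply algHom_ext
  intro i
  rw [AlgHom.comp_apply, polyAct_X, map_sum, polyAct_X]
  have : ((σ * τ)⁻¹).val = (τ⁻¹).val * (σ⁻¹).val := by
    rw [mul_inv_rev]; rfl
  rw [this]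
  simp only [map_smul, polyAct_X, Finset.smul_sum, smul_smul]
  rw [Finset.sum_comm]
  refine Finset.sum_congr rfl fun k _ => ?_
  rw [Matrix.mul_apply, Finset.sum_smul]

lemma polyAct_invol {σ : Matrix.GeneralLinearGroup (Fin n) ℝ} (hσ : σ * σ = 1)
    (p : MvPolynomial (Fin n) ℝ) : polyAct σ (polyAct σ p) = p := by
  have := congrFun (congrArg DFunLike.coe (polyAct_mul σ σ)) p
  simp only [AlgHom.comp_apply] at this
  rw [this, hσ, polyAct_one]; rfl

lemma exists_sigma (G : Subgroup (Matrix.GeneralLinearGroup (Fin n) ℝ))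
    (hG : Nat.card G = 2) :
    ∃ σ, σ ∈ G ∧ σ ≠ 1 ∧ σ * σ = 1 ∧ (G : Set (Matrix.GeneralLinearGroup (Fin n) ℝ)) = {1, σ} := by
  obtain ⟨x, y, hxy, huniv⟩ := Nat.card_eq_two_iff.1 hG
  have h1 : ∀ z : G, z = x ∨ z = y := by
    intro z
    have : z ∈ ({x, y} : Set G) := huniv ▸ Set.mem_univ z
    simpa using this
  -- get the nontrivial element
  obtain ⟨σ', hσ'1, hσ'2⟩ : ∃ σ' : G, σ' ≠ 1 ∧ ∀ z : G, z = 1 ∨ z = σ' := by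
    rcases h1 1 with h | h
    · refine ⟨y, fun hy => hxy ?_, fun z => (h1 z).imp (fun hz => hz.trans h.symm) id⟩
      rw [← h, hy]
    · refine ⟨x, fun hx => hxy ?_, fun z => ((h1 z).imp id (fun hz => hz.trans h.symm)).symm⟩
      rw [← h, hx]
  have hsq : σ' * σ' = 1 := by
    rcases hσ'2 (σ' * σ') with h | h
    · exact h
    · exact absurd (mul_left_cancel (a := σ') (by rw [h, mul_one])) hσ'1
  refine ⟨σ'.val, σ'.2, ?_, ?_, ?_⟩
  · intro h
    exact hσ'1 (Subtype.ext h)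
  · exact congrArg Subtype.val hsq
  · ext τ
    simp only [Set.mem_insert_iff, Set.mem_singleton_iff, SetLike.mem_coe]
    constructor
    · intro hτ
      rcases hσ'2 ⟨τ, hτ⟩ with h | h
      · exact Or.inl (congrArg Subtype.val h)
      · exact Or.inr (congrArg Subtype.val h)
    · rintro (rfl | rfl)
      · exact G.one_mem
      · exact σ'.2

noncomputable def gp (σ : Matrix.GeneralLinearGroup (Fin n) ℝ) (i : Fin n) :
    MvPolynomial (Fin n) ℝ := (2:ℝ)⁻¹ • (X i + polyAct σ (X i))

noncomputable def fp (σ : Matrix.GeneralLinearGroup (Fin n) ℝ) (i : Fin n) :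
    MvPolynomial (Fin n) ℝ := X i - gp σ i

variable {σ : Matrix.GeneralLinearGroup (Fin n) ℝ}

lemma polyAct_gp (hσ : σ * σ = 1) (i : Fin n) : polyAct σ (gp σ i) = gp σ i := by
  unfold gp
  rw [map_smul, map_add, polyAct_invol hσ]
  module

lemma polyAct_X_eq (i : Fin n) : polyAct σ (X i) = (2:ℝ) • gp σ i - X i := by
  unfold gp; module

lemma polyAct_fp (hσ : σ * σ = 1) (i : Fin n) : polyAct σ (fp σ i) = -fp σ i := by
  unfold fp
  rw [map_sub, polyAct_gp hσ, polyAct_X_eq]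
  module

lemma X_eq_sum_smul_polyAct (hσ : σ * σ = 1) (i : Fin n) :
    X i = ∑ j, (σ⁻¹).val i j • polyAct σ (X j) := by
  have := congrArg (polyAct σ) (polyAct_X σ i)
  rw [polyAct_invol hσ, map_sum] at this
  simp only [map_smul] at this
  exact this

lemma sum_smul_gp (hσ : σ * σ = 1) (i : Fin n) :
    ∑ j, (σ⁻¹).val i j • gp σ j = gp σ i := by
  unfold gp
  have h1 := polyAct_X σ i
  have h2 := X_eq_sum_smul_polyAct hσ i
  calc ∑ j, (σ⁻¹).val i j • ((2:ℝ)⁻¹ • (X j + polyAct σ (X j)))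
      = (2:ℝ)⁻¹ • ((∑ j, (σ⁻¹).val i j • X j) + ∑ j, (σ⁻¹).val i j • polyAct σ (X j)) := by
        rw [← Finset.sum_add_distrib, Finset.smul_sum]
        refine Finset.sum_congr rfl fun j _ => ?_
        module
    _ = (2:ℝ)⁻¹ • (X i + polyAct σ (X i)) := by rw [← h1, ← h2]; module

lemma sum_smul_fp (hσ : σ * σ = 1) (i : Fin n) :
    ∑ j, (σ⁻¹).val i j • fp σ j = -fp σ i := by
  unfold fp
  have h1 := (polyAct_X σ i).symm
  have h2 := sum_smul_gp hσ i
  calc ∑ j, (σ⁻¹).val i j • (X j - gp σ j)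
      = (∑ j, (σ⁻¹).val i j • X j) - ∑ j, (σ⁻¹).val i j • gp σ j := by
        rw [← Finset.sum_sub_distrib]
        refine Finset.sum_congr rfl fun j _ => ?_
        module
    _ = -(X i - gp σ i) := by rw [h1, h2, polyAct_X_eq]; module

section Main

variable {G : Subgroup (Matrix.GeneralLinearGroup (Fin n) ℝ)}

lemma mem_inv_iff (hset : (G : Set (Matrix.GeneralLinearGroup (Fin n) ℝ)) = {1, σ})
    (p : MvPolynomial (Fin n) ℝ) : p ∈ invariants G ↔ polyAct σ p = p := by
  have hσG : σ ∈ G := by rw [← SetLike.mem_coe, hset]; exact Or.inr rfl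
  constructor
  · exact fun h => h σ hσG
  · intro h τ hτ
    rw [← SetLike.mem_coe, hset] at hτ
    rcases hτ with rfl | rfl
    · rw [polyAct_one]; rfl
    · exact h

lemma reynolds_eq (hσ1 : σ ≠ 1)
    (hset : (G : Set (Matrix.GeneralLinearGroup (Fin n) ℝ)) = {1, σ})
    (hG : Nat.card G = 2) (p : MvPolynomial (Fin n) ℝ) :
    reynolds G p = (2:ℝ)⁻¹ • (p + polyAct σ p) := by
  unfold reynolds
  rw [hG, hset, finsum_mem_pair hσ1.symm]
  norm_num
  rw [polyAct_one]
  rfl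

lemma reynolds_X_eq (hσ1 : σ ≠ 1)
    (hset : (G : Set (Matrix.GeneralLinearGroup (Fin n) ℝ)) = {1, σ})
    (hG : Nat.card G = 2) (i : Fin n) :
    X i - reynolds G (X i) = fp σ i := by
  rw [reynolds_eq hσ1 hset hG]
  rfl

lemma phiA_exists (φ : invariants G →+* ℝ) :
    ∃ φA : invariants G →ₐ[ℝ] ℝ, ∀ p, φA p = φ p := by
  have key : ∀ r : ℝ, φ (algebraMap ℝ (invariants G) r) = r := by
    intro r
    have : φ.comp (algebraMap ℝ (invariants G)) = RingHom.id ℝ := Subsingleton.elim _ _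
    exact congrFun (congrArg DFunLike.coe this) r
  refine ⟨AlgHom.mk' φ fun r x => ?_, fun p => rfl⟩
  rw [Algebra.smul_def, map_mul, key, smul_eq_mul]

end Main

lemma fpfp_mem {G : Subgroup (Matrix.GeneralLinearGroup (Fin n) ℝ)} (hσ2 : σ * σ = 1)
    (hinv : ∀ p, p ∈ invariants G ↔ polyAct σ p = p) (i j : Fin n) :
    fp σ i * fp σ j ∈ invariants G := by
  rw [hinv, map_mul, polyAct_fp hσ2, polyAct_fp hσ2, neg_mul_neg]

lemma prodf_mem {G : Subgroup (Matrix.GeneralLinearGroup (Fin n) ℝ)} (hσ2 : σ * σ = 1)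
    (hinv : ∀ p, p ∈ invariants G ↔ polyAct σ p = p) (β : Fin n → ℕ)
    (hE : Even (∑ i, β i)) : (∏ i, fp σ i ^ β i) ∈ invariants G := by
  rw [hinv, map_prod]
  simp only [map_pow, polyAct_fp hσ2]
  calc ∏ i, (-fp σ i) ^ β i
      = ∏ i, ((-1 : MvPolynomial (Fin n) ℝ) ^ β i * fp σ i ^ β i) :=
        Finset.prod_congr rfl fun i _ => by rw [neg_pow]
    _ = (-1 : MvPolynomial (Fin n) ℝ) ^ (∑ i, β i) * ∏ i, fp σ i ^ β i := by
        rw [Finset.prod_mul_distrib, Finset.prod_pow_eq_pow_sum]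
    _ = ∏ i, fp σ i ^ β i := by rw [hE.neg_one_pow, one_mul]

lemma gp_mem {G : Subgroup (Matrix.GeneralLinearGroup (Fin n) ℝ)} (hσ2 : σ * σ = 1)
    (hinv : ∀ p, p ∈ invariants G ↔ polyAct σ p = p) (i : Fin n) :
    gp σ i ∈ invariants G := (hinv _).2 (polyAct_gp hσ2 i)

lemma extension_exists {G : Subgroup (Matrix.GeneralLinearGroup (Fin n) ℝ)}
    (hσ2 : σ * σ = 1)
    (hinv : ∀ p, p ∈ invariants G ↔ polyAct σ p = p)
    (f : MvPolynomial (Fin n) ℝ) (hfdef : f = ∑ i, fp σ i ^ 2)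
    (hf : f ∈ invariants G) (φ : invariants G →+* ℝ)
    (hφ : 0 ≤ φ ⟨f, hf⟩) :
    ∃ ψ : MvPolynomial (Fin n) ℝ →+* ℝ,
      ∀ (p : MvPolynomial (Fin n) ℝ) (hp : p ∈ invariants G), ψ p = φ ⟨p, hp⟩ := by
  obtain ⟨φA, hφA⟩ := phiA_exists φ
  obtain ⟨a, ha⟩ : ∃ a : Fin n → ℝ, ∀ i, a i = φA ⟨gp σ i, gp_mem hσ2 hinv i⟩ :=
    ⟨_, fun i => rfl⟩
  obtain ⟨c, hc⟩ : ∃ c : Fin n → Fin n → ℝ,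
      ∀ i j, c i j = φA ⟨fp σ i * fp σ j, fpfp_mem hσ2 hinv i j⟩ := ⟨_, fun i j => rfl⟩
  -- the product relation
  have hcrel : ∀ i j k l, c i j * c k l = c i k * c j l := by
    intro i j k l
    rw [hc, hc, hc, hc, ← map_mul, ← map_mul]
    congr 1
    exact Subtype.ext (by show _ * _ = _ * _; ring)
  -- φ f = ∑ c i i
  have hsum : (0:ℝ) ≤ ∑ i, c i i := by
    have key : (⟨f, hf⟩ : invariants G)
        = ∑ i, ⟨fp σ i * fp σ i, fpfp_mem hσ2 hinv i i⟩ := by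
      apply Subtype.ext
      rw [AddSubmonoidClass.coe_finset_sum]
      show f = _
      rw [hfdef]
      exact Finset.sum_congr rfl fun i _ => by rw [sq]
    rw [← hφA, key, map_sum] at hφ
    simpa only [← hc] using hφ
  -- a is S-invariant
  have hSa : ∀ i, ∑ j, (σ⁻¹).val i j * a j = a i := by
    intro i
    have key : (⟨gp σ i, gp_mem hσ2 hinv i⟩ : invariants G)
        = ∑ j, (σ⁻¹).val i j • ⟨gp σ j, gp_mem hσ2 hinv j⟩ := by
      apply Subtype.ext
      rw [AddSubmonoidClass.coe_finset_sum]
      simp only [SetLike.val_smul]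
      exact (sum_smul_gp hσ2 i).symm
    have h2 := congrArg φA key
    rw [map_sum] at h2
    simp only [map_smul, smul_eq_mul, ← ha] at h2
    exact h2.symm
  -- ∑ S c = -c
  have hScf : ∀ i j, ∑ k, (σ⁻¹).val i k * c k j = -(c i j) := by
    intro i j
    have key : (∑ k, (σ⁻¹).val i k • (⟨fp σ k * fp σ j, fpfp_mem hσ2 hinv k j⟩ : invariants G))
        = - ⟨fp σ i * fp σ j, fpfp_mem hσ2 hinv i j⟩ := by
      apply Subtype.ext
      rw [AddSubmonoidClass.coe_finset_sum]
      simp only [SetLike.val_smul]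
      show _ = -(fp σ i * fp σ j)
      calc ∑ k, (σ⁻¹).val i k • (fp σ k * fp σ j)
          = (∑ k, (σ⁻¹).val i k • fp σ k) * fp σ j := by
            rw [Finset.sum_mul]
            exact Finset.sum_congr rfl fun k _ => (smul_mul_assoc _ _ _).symm
        _ = -(fp σ i * fp σ j) := by rw [sum_smul_fp hσ2, neg_mul]
    have h2 := congrArg φA key
    rw [map_sum, map_neg] at h2
    simp only [map_smul, smul_eq_mul, ← hc] at h2
    exact h2
  -- construct t
  obtain ⟨t, ht2, hSt⟩ : ∃ t : Fin n → ℝ,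
      (∀ (β : Fin n → ℕ) (hE : Even (∑ i, β i)),
        φA ⟨∏ i, fp σ i ^ β i, prodf_mem hσ2 hinv β hE⟩ = ∏ i, t i ^ β i) ∧
      (∀ i, ∑ j, (σ⁻¹).val i j * t j = -(t i)) := by
    -- square of φA of an even product
    have hsq : ∀ (β : Fin n → ℕ) (hE : Even (∑ i, β i)),
        φA ⟨∏ i, fp σ i ^ β i, prodf_mem hσ2 hinv β hE⟩ ^ 2 = ∏ i, c i i ^ β i := by
      intro β hE
      rw [← map_pow]
      have key : (⟨∏ i, fp σ i ^ β i, prodf_mem hσ2 hinv β hE⟩ : invariants G) ^ 2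
          = ∏ i, (⟨fp σ i * fp σ i, fpfp_mem hσ2 hinv i i⟩ : invariants G) ^ β i := by
        apply Subtype.ext
        push_cast
        rw [← Finset.prod_pow]
        exact Finset.prod_congr rfl fun i _ => by ring
      rw [key, map_prod]
      exact Finset.prod_congr rfl fun i _ => by rw [map_pow, ← hc]
    by_cases hC : ∀ i, c i i = 0
    · refine ⟨0, ?_, ?_⟩
      · intro β hE
        simp only [Pi.zero_apply]
        by_cases hβ : ∀ i, β i = 0
        · have h1 : (⟨∏ i, fp σ i ^ β i, prodf_mem hσ2 hinv β hE⟩ : invariants G) = 1 := by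
            apply Subtype.ext
            show ∏ i, fp σ i ^ β i = (1 : MvPolynomial (Fin n) ℝ)
            exact Finset.prod_eq_one fun i _ => by rw [hβ i, pow_zero]
          rw [h1, map_one]
          exact (Finset.prod_eq_one fun i _ => by rw [hβ i, pow_zero]).symm
        · push_neg at hβ
          obtain ⟨j, hj⟩ := hβ
          have h2 := hsq β hE
          have hz : ∏ i, c i i ^ β i = 0 :=
            Finset.prod_eq_zero (Finset.mem_univ j) (by rw [hC j, zero_pow hj])
          rw [hz, pow_eq_zero_iff (two_ne_zero)] at h2
          rw [h2]
          symm
          exact Finset.prod_eq_zero (Finset.mem_univ j) (by rw [zero_pow hj])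
      · intro i; simp
    · push_neg at hC
      obtain ⟨i₀, hi₀⟩ := hC
      have hkey : ∀ i j, c i i₀ * c j i₀ = c i j * c i₀ i₀ := fun i j => hcrel i i₀ j i₀
      have hpos : 0 < c i₀ i₀ := by
        rcases lt_or_ge 0 (c i₀ i₀) with h | h
        · exact h
        · exfalso
          have hneg : c i₀ i₀ < 0 := lt_of_le_of_ne h hi₀
          have hle : ∀ j, c j j ≤ 0 := by
            intro j
            have h1 := hkey j j
            nlinarith [mul_self_nonneg (c j i₀)]
          have h0 : ∑ i, c i i = 0 :=
            le_antisymm (Finset.sum_nonpos fun i _ => hle i) hsum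
          have := (Finset.sum_eq_zero_iff_of_nonpos fun i _ => hle i).1 h0 i₀
            (Finset.mem_univ i₀)
          exact hi₀ this
      set s := Real.sqrt (c i₀ i₀) with hs
      have hs2 : s ^ 2 = c i₀ i₀ := Real.sq_sqrt hpos.le
      have hs0 : 0 < s := Real.sqrt_pos.2 hpos
      refine ⟨fun i => c i i₀ / s, ?_, ?_⟩
      · intro β hE
        obtain ⟨k, hk⟩ := id hE
        have key : (⟨∏ i, fp σ i ^ β i, prodf_mem hσ2 hinv β hE⟩ : invariants G)
            * (⟨fp σ i₀ * fp σ i₀, fpfp_mem hσ2 hinv i₀ i₀⟩ : invariants G) ^ k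
            = ∏ i, (⟨fp σ i * fp σ i₀, fpfp_mem hσ2 hinv i i₀⟩ : invariants G) ^ β i := by
          apply Subtype.ext
          push_cast
          calc (∏ i, fp σ i ^ β i) * (fp σ i₀ * fp σ i₀) ^ k
              = (∏ i, fp σ i ^ β i) * fp σ i₀ ^ (∑ i, β i) := by
                rw [hk, ← sq, ← pow_mul, two_mul]
            _ = ∏ i, (fp σ i * fp σ i₀) ^ β i := by
                rw [← Finset.prod_pow_eq_pow_sum, ← Finset.prod_mul_distrib]
                exact Finset.prod_congr rfl fun i _ => (mul_pow _ _ _).symm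
        have h3 := congrArg φA key
        rw [map_mul, map_pow, map_prod] at h3
        simp only [map_pow, ← hc] at h3
        -- h3 : φA ⟨∏ f^β⟩ * c i₀ i₀ ^ k = ∏ i, c i i₀ ^ β i
        have h4 : ∏ i, c i i₀ ^ β i = (∏ i, (c i i₀ / s) ^ β i) * c i₀ i₀ ^ k := by
          have : ∀ i, c i i₀ = (c i i₀ / s) * s := fun i => (div_mul_cancel₀ _ hs0.ne').symm
          calc ∏ i, c i i₀ ^ β i = ∏ i, ((c i i₀ / s) ^ β i * s ^ β i) := by
                refine Finset.prod_congr rfl fun i _ => ?_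
                rw [← mul_pow, ← this i]
            _ = (∏ i, (c i i₀ / s) ^ β i) * s ^ (∑ i, β i) := by
                rw [Finset.prod_mul_distrib, Finset.prod_pow_eq_pow_sum]
            _ = (∏ i, (c i i₀ / s) ^ β i) * c i₀ i₀ ^ k := by
                rw [hk, ← two_mul, pow_mul, hs2]
        rw [h4] at h3
        exact mul_right_cancel₀ (pow_ne_zero k hi₀) h3
      · intro i
        rw [← neg_div, ← hScf i i₀, Finset.sum_div]
        exact Finset.sum_congr rfl fun j _ => by
          show (σ⁻¹).val i j * (c j i₀ / s) = (σ⁻¹).val i j * c j i₀ / s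
          rw [mul_div_assoc]
  -- the evaluation point
  obtain ⟨xv, hxv⟩ : ∃ xv : Fin n → ℝ, ∀ i, xv i = a i + t i := ⟨_, fun i => rfl⟩
  have hevg : ∀ i, aeval xv (gp σ i) = a i := by
    intro i
    have h1 : aeval xv (polyAct σ (X i)) = a i - t i := by
      rw [polyAct_X, map_sum]
      simp only [map_smul, aeval_X, smul_eq_mul]
      have e1 : ∑ j, (σ⁻¹).val i j * xv j
          = (∑ j, (σ⁻¹).val i j * a j) + ∑ j, (σ⁻¹).val i j * t j := by
        rw [← Finset.sum_add_distrib]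
        exact Finset.sum_congr rfl fun j _ => by rw [hxv, mul_add]
      rw [e1, hSa, hSt]; ring
    unfold gp
    rw [map_smul, map_add, aeval_X, h1, hxv, smul_eq_mul]; ring
  have hevf : ∀ i, aeval xv (fp σ i) = t i := by
    intro i
    unfold fp
    rw [map_sub, aeval_X, hevg, hxv]; ring
  -- the auxiliary polynomial ring in 2n variables
  obtain ⟨Φm, hΦl, hΦr⟩ : ∃ Φm : MvPolynomial (Fin n ⊕ Fin n) ℝ →ₐ[ℝ] MvPolynomial (Fin n) ℝ,
      (∀ i, Φm (X (Sum.inl i)) = gp σ i) ∧ (∀ i, Φm (X (Sum.inr i)) = fp σ i) :=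
    ⟨aeval (Sum.elim (gp σ) (fp σ)), fun i => by simp, fun i => by simp⟩
  obtain ⟨Bm, hBl, hBr⟩ : ∃ Bm : MvPolynomial (Fin n ⊕ Fin n) ℝ →ₐ[ℝ]
      MvPolynomial (Fin n ⊕ Fin n) ℝ,
      (∀ i, Bm (X (Sum.inl i)) = X (Sum.inl i)) ∧ (∀ i, Bm (X (Sum.inr i)) = - X (Sum.inr i)) :=
    ⟨aeval (Sum.elim (fun i => X (Sum.inl i)) (fun i => - X (Sum.inr i))),
      fun i => by simp, fun i => by simp⟩
  obtain ⟨βm, hβl, hβr⟩ : ∃ βm : MvPolynomial (Fin n ⊕ Fin n) ℝ →ₐ[ℝ] ℝ,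
      (∀ i, βm (X (Sum.inl i)) = a i) ∧ (∀ i, βm (X (Sum.inr i)) = t i) :=
    ⟨aeval (Sum.elim a t), fun i => by simp, fun i => by simp⟩
  have hBB : ∀ q, Bm (Bm q) = q := by
    have : Bm.comp Bm = AlgHom.id ℝ _ := by
      apply algHom_ext
      rintro (i | i)
      · rw [AlgHom.comp_apply, hBl, hBl]; rfl
      · rw [AlgHom.comp_apply, hBr, map_neg, hBr, neg_neg]; rfl
    exact fun q => DFunLike.congr_fun this q
  have hΦB : ∀ q, Φm (Bm q) = polyAct σ (Φm q) := by
    have : Φm.comp Bm = (polyAct σ).comp Φm := by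
      apply algHom_ext
      rintro (i | i)
      · rw [AlgHom.comp_apply, hBl, hΦl, AlgHom.comp_apply, hΦl, polyAct_gp hσ2]
      · rw [AlgHom.comp_apply, hBr, map_neg, hΦr, AlgHom.comp_apply, hΦr, polyAct_fp hσ2]
    exact fun q => DFunLike.congr_fun this q
  have hβΦ : ∀ q, aeval xv (Φm q) = βm q := by
    have : ((aeval xv : MvPolynomial (Fin n) ℝ →ₐ[ℝ] ℝ).comp Φm) = βm := by
      apply algHom_ext
      rintro (i | i)
      · rw [AlgHom.comp_apply, hΦl, hevg, hβl]
      · rw [AlgHom.comp_apply, hΦr, hevf, hβr]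
    exact fun q => DFunLike.congr_fun this q
  have hsurjp : ∀ p : MvPolynomial (Fin n) ℝ, ∃ q, Φm q = p := by
    have : Φm.comp (aeval fun i => X (Sum.inl i) + X (Sum.inr i)) =
        AlgHom.id ℝ (MvPolynomial (Fin n) ℝ) := by
      apply algHom_ext
      intro i
      rw [AlgHom.comp_apply, aeval_X, map_add, hΦl, hΦr, AlgHom.id_apply]
      unfold fp
      rw [add_sub_cancel]
    exact fun p => ⟨aeval (fun i => X (Sum.inl i) + X (Sum.inr i)) p,
      DFunLike.congr_fun this p⟩
  -- the z-degree
  obtain ⟨zdeg, hzdeg⟩ : ∃ z : ((Fin n ⊕ Fin n) →₀ ℕ) → ℕ,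
      ∀ m, z m = ∑ i, m (Sum.inr i) := ⟨_, fun m => rfl⟩
  have hmonX : ∀ (m : (Fin n ⊕ Fin n) →₀ ℕ) (cc : ℝ),
      monomial m cc = C cc * ∏ w : Fin n ⊕ Fin n, X w ^ m w := by
    intro m cc
    rw [monomial_eq, Finsupp.prod_fintype]
    intro w; exact pow_zero _
  have hmonΦ : ∀ m : (Fin n ⊕ Fin n) →₀ ℕ,
      Φm (monomial m 1) = (∏ i, gp σ i ^ m (Sum.inl i)) * ∏ i, fp σ i ^ m (Sum.inr i) := by
    intro m
    rw [hmonX, C_1, one_mul, map_prod, Fintype.prod_sum_type]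
    congr 1
    · exact Finset.prod_congr rfl fun i _ => by rw [map_pow, hΦl]
    · exact Finset.prod_congr rfl fun i _ => by rw [map_pow, hΦr]
  have hmonβ : ∀ m : (Fin n ⊕ Fin n) →₀ ℕ,
      βm (monomial m 1) = (∏ i, a i ^ m (Sum.inl i)) * ∏ i, t i ^ m (Sum.inr i) := by
    intro m
    rw [hmonX, C_1, one_mul, map_prod, Fintype.prod_sum_type]
    congr 1
    · exact Finset.prod_congr rfl fun i _ => by rw [map_pow, hβl]
    · exact Finset.prod_congr rfl fun i _ => by rw [map_pow, hβr]
  have hmonB : ∀ (m : (Fin n ⊕ Fin n) →₀ ℕ) (cc : ℝ),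
      Bm (monomial m cc) = ((-1:ℝ) ^ zdeg m) • monomial m cc := by
    intro m cc
    rw [hmonX, map_mul, map_prod]
    have hC : Bm (C cc) = C cc := by
      have : (C cc : MvPolynomial (Fin n ⊕ Fin n) ℝ) = algebraMap ℝ _ cc := rfl
      rw [this, Bm.commutes]
    rw [hC, Fintype.prod_sum_type]
    simp only [map_pow, hBl, hBr]
    have h2 : ∏ i, (- X (Sum.inr i) : MvPolynomial (Fin n ⊕ Fin n) ℝ) ^ m (Sum.inr i)
        = ((-1 : MvPolynomial (Fin n ⊕ Fin n) ℝ)) ^ zdeg m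
          * ∏ i, X (Sum.inr i) ^ m (Sum.inr i) := by
      rw [hzdeg, ← Finset.prod_pow_eq_pow_sum, ← Finset.prod_mul_distrib]
      exact Finset.prod_congr rfl fun i _ => by rw [neg_pow]
    have h3 : (C ((-1:ℝ) ^ zdeg m) : MvPolynomial (Fin n ⊕ Fin n) ℝ)
        = (-1 : MvPolynomial (Fin n ⊕ Fin n) ℝ) ^ zdeg m := by
      rw [map_pow, map_neg, C_1]
    rw [h2]
    rw [smul_eq_C_mul]
    rw [h3]
    rw [Fintype.prod_sum_type]
    ring
  have hcoeffB : ∀ (q : MvPolynomial (Fin n ⊕ Fin n) ℝ) (m : (Fin n ⊕ Fin n) →₀ ℕ),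
      coeff m (Bm q) = (-1:ℝ) ^ zdeg m * coeff m q := by
    intro q
    induction q using MvPolynomial.induction_on' with
    | monomial m' cc =>
      intro m
      rw [hmonB, coeff_smul, smul_eq_mul]
      by_cases h : m' = m
      · subst h; rfl
      · rw [coeff_monomial, if_neg h, mul_zero, mul_zero]
    | add p q hp hq =>
      intro m
      rw [map_add, coeff_add, coeff_add, hp, hq]
      ring
  have hodd : ∀ q : MvPolynomial (Fin n ⊕ Fin n) ℝ, Bm q = q →
      ∀ m ∈ q.support, Even (zdeg m) := by
    intro q hBq m hm
    by_contra hodd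
    have h1 := hcoeffB q m
    rw [hBq, (Nat.not_even_iff_odd.1 hodd).neg_one_pow] at h1
    have : coeff m q = 0 := by linarith
    exact (MvPolynomial.mem_support_iff.1 hm) this
  have hmonMem : ∀ m : (Fin n ⊕ Fin n) →₀ ℕ, Even (zdeg m) →
      Φm (monomial m 1) ∈ invariants G := by
    intro m hE
    rw [hmonΦ]
    exact mul_mem (prod_mem fun i _ => pow_mem (gp_mem hσ2 hinv i) _)
      (prodf_mem hσ2 hinv _ (by rwa [← hzdeg]))
  have hmonVal : ∀ (m : (Fin n ⊕ Fin n) →₀ ℕ) (hE : Even (zdeg m))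
      (hmem : Φm (monomial m 1) ∈ invariants G),
      φA ⟨Φm (monomial m 1), hmem⟩ = βm (monomial m 1) := by
    intro m hE hmem
    have key : (⟨Φm (monomial m 1), hmem⟩ : invariants G)
        = (∏ i, (⟨gp σ i, gp_mem hσ2 hinv i⟩ : invariants G) ^ m (Sum.inl i))
          * ⟨∏ i, fp σ i ^ m (Sum.inr i),
              prodf_mem hσ2 hinv _ (by rwa [← hzdeg])⟩ := by
      apply Subtype.ext
      push_cast
      exact hmonΦ m
    rw [key, map_mul, map_prod, hmonβ]
    congr 1
    · exact Finset.prod_congr rfl fun i _ => by rw [map_pow, ← ha]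
    · exact ht2 (fun i => m (Sum.inr i)) (by rwa [← hzdeg])
  -- main assembly
  have hmain : ∀ r : MvPolynomial (Fin n ⊕ Fin n) ℝ, Bm r = r →
      ∃ h : Φm r ∈ invariants G, φA ⟨Φm r, h⟩ = βm r := by
    intro r hr
    have hsupp : ∀ m ∈ r.support, Even (zdeg m) := hodd r hr
    have hrsum : r = ∑ m ∈ r.support, coeff m r • monomial m 1 := by
      conv_lhs => rw [MvPolynomial.as_sum r]
      exact Finset.sum_congr rfl fun m _ => by rw [smul_monomial, smul_eq_mul, mul_one]
    have h2 : Φm r = ∑ m ∈ r.support.attach, coeff m.1 r • Φm (monomial m.1 1) := by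
      rw [Finset.sum_attach r.support (fun m => coeff m r • Φm (monomial m 1))]
      conv_lhs => rw [hrsum]
      rw [map_sum]
      exact Finset.sum_congr rfl fun m _ => by rw [map_smul]
    have hY : ∀ m : r.support, (Φm (monomial m.1 1)) ∈ invariants G :=
      fun m => hmonMem m.1 (hsupp m.1 m.2)
    have hYmem : Φm r ∈ invariants G := by
      rw [h2]
      exact Subalgebra.sum_mem _ fun m _ =>
        Subalgebra.smul_mem _ (hY m) _
    refine ⟨hYmem, ?_⟩
    have keq : ∀ (h : Φm r ∈ invariants G), (⟨Φm r, h⟩ : invariants G)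
        = ∑ m ∈ r.support.attach, coeff m.1 r • (⟨Φm (monomial m.1 1), hY m⟩ : invariants G) := by
      intro h
      apply Subtype.ext
      rw [AddSubmonoidClass.coe_finset_sum]
      simp only [SetLike.val_smul]
      exact h2
    rw [keq hYmem, map_sum]
    simp only [map_smul, smul_eq_mul]
    have h3 : ∀ m ∈ r.support.attach,
        coeff m.1 r * φA ⟨Φm (monomial m.1 1), hY m⟩ = coeff m.1 r * βm (monomial m.1 1) :=
      fun m _ => by rw [hmonVal m.1 (hsupp m.1 m.2)]
    rw [Finset.sum_congr rfl h3]
    rw [Finset.sum_attach r.support (fun m => coeff m r * βm (monomial m 1))]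
    conv_rhs => rw [hrsum]
    rw [map_sum]
    exact (Finset.sum_congr rfl fun m _ => by rw [map_smul, smul_eq_mul]).symm
  -- final assembly
  refine ⟨(aeval xv : MvPolynomial (Fin n) ℝ →ₐ[ℝ] ℝ).toRingHom, ?_⟩
  intro p hp
  obtain ⟨q, hq⟩ := hsurjp p
  obtain ⟨r, hBr2, hΦr2⟩ : ∃ r, Bm r = r ∧ Φm r = p := by
    refine ⟨(2:ℝ)⁻¹ • (q + Bm q), ?_, ?_⟩
    · rw [map_smul, map_add, hBB, add_comm]
    · rw [map_smul, map_add, hq, hΦB, hq, (hinv p).1 hp, ← two_smul ℝ p, smul_smul]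
      norm_num
  obtain ⟨hmem, hval⟩ := hmain r hBr2
  have e1 : (⟨p, hp⟩ : invariants G) = ⟨Φm r, hmem⟩ := Subtype.ext hΦr2.symm
  show aeval xv p = φ ⟨p, hp⟩
  rw [← hφA, e1, hval, ← hβΦ r, hΦr2]

end Stmt14

/-- for a subgroup `G ⊆ GL_n(ℝ)` of order 2 and
`f = ∑ᵢ (Xᵢ − R_G(Xᵢ))²`, the polynomial `f` is `G`-invariant, and a ring homomorphism
`φ : ℝ[X]^G → ℝ` extends to `ℝ[X]` iff `φ(f) ≥ 0`. -/
theorem statement_14 {n : ℕ}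
    (G : Subgroup (Matrix.GeneralLinearGroup (Fin n) ℝ)) [Finite G]
    (hG : Nat.card G = 2)
    (f : MvPolynomial (Fin n) ℝ)
    (hfdef : f = ∑ i, (X i - reynolds G (X i)) ^ 2) :
    f ∈ invariants G ∧
    ∀ (hf : f ∈ invariants G) (φ : invariants G →+* ℝ),
      (∃ ψ : MvPolynomial (Fin n) ℝ →+* ℝ,
        ∀ (p : MvPolynomial (Fin n) ℝ) (hp : p ∈ invariants G), ψ p = φ ⟨p, hp⟩) ↔
      0 ≤ φ ⟨f, hf⟩ := by
  obtain ⟨σ, hσG, hσ1, hσ2, hset⟩ := Stmt14.exists_sigma G hG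
  have hinv : ∀ p, p ∈ invariants G ↔ polyAct σ p = p := fun p => Stmt14.mem_inv_iff hset p
  have hfdef' : f = ∑ i, Stmt14.fp σ i ^ 2 := by
    rw [hfdef]
    exact Finset.sum_congr rfl fun i _ => by rw [Stmt14.reynolds_X_eq hσ1 hset hG]
  have hfmem : f ∈ invariants G := by
    rw [hinv, hfdef', map_sum]
    simp only [map_pow, Stmt14.polyAct_fp hσ2]
    exact Finset.sum_congr rfl fun i _ => by rw [neg_sq]
  refine ⟨hfmem, fun hf φ => ⟨?_, ?_⟩⟩
  · rintro ⟨ψ, hψ⟩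
    rw [← hψ f hf, hfdef', map_sum]
    refine Finset.sum_nonneg fun i _ => ?_
    rw [map_pow]
    exact sq_nonneg _
  · intro hφ
    exact Stmt14.extension_exists hσ2 hinv f hfdef' hf φ hφ
end

section
/- Let G be a finite abelian subgroup of GL_n(ℝ) whose 2-torsion subgroup {σ ∈ G : σ² = 1} has order 2^k. Then there exist f₁,…,f_k ∈ ℝ[X]^G such that for every x ∈ ℂⁿ with trivial G-stabilizer (σ·x = x implies σ = 1) satisfying f(x) ∈ ℝ for all f ∈ ℝ[X]^G, one has: Re(f_i(x)) ≥ 0 for all i = 1,…,k if and only if σ·x ∈ ℝⁿ for some σ ∈ G. (That is, the orbit space ℝⁿ/G is generically described by k invariant inequalities, where 2^k is the order of the maximal elementary abelian 2-subgroup of G.) -/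
open MvPolynomial

/-- The action of `σ ∈ GL_n(ℝ)` on `ℂⁿ`, via the inclusion `GL_n(ℝ) ⊆ GL_n(ℂ)`. -/
noncomputable def mAct {n : ℕ} (σ : Matrix.GeneralLinearGroup (Fin n) ℝ) (x : Fin n → ℂ) :
    Fin n → ℂ := fun i => ∑ j, (σ.val i j : ℂ) * x j


namespace S17
open MvPolynomial
variable {n : ℕ}

abbrev GLn (n : ℕ) := Matrix.GeneralLinearGroup (Fin n) ℝ

/-! ### generalities on the polynomial action -/

lemma aeval_polyAct' {A : Type*} [CommSemiring A] [Algebra ℝ A] (σ : GLn n)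
    (y : Fin n → A) (p : MvPolynomial (Fin n) ℝ) :
    aeval y (polyAct σ p) = aeval (fun i => ∑ j, (σ⁻¹).val i j • y j) p := by
  rw [polyAct, ← AlgHom.comp_apply, comp_aeval]
  have : (fun i => (aeval y) (∑ j : Fin n, (σ⁻¹).val i j • (X j : MvPolynomial (Fin n) ℝ)))
      = fun i => ∑ j, (σ⁻¹).val i j • y j := by
    funext i
    simp
  rw [this]

lemma aeval_polyAct (σ : GLn n) (x : Fin n → ℂ) (p : MvPolynomial (Fin n) ℝ) :
    aeval x (polyAct σ p) = aeval (mAct σ⁻¹ x) p := by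
  rw [aeval_polyAct']
  have : (fun i => ∑ j, (σ⁻¹).val i j • x j) = mAct σ⁻¹ x := by
    funext i
    simp [mAct, Algebra.smul_def]
  rw [this]

lemma mAct_mul (σ τ : GLn n) (x : Fin n → ℂ) : mAct σ (mAct τ x) = mAct (σ * τ) x := by
  funext i
  simp only [mAct, Finset.mul_sum, Units.val_mul, Matrix.mul_apply]
  rw [Finset.sum_comm]
  congr 1; funext m
  push_cast
  rw [Finset.sum_mul]
  congr 1; funext j; ring

lemma mAct_one (x : Fin n → ℂ) : mAct 1 x = x := by
  funext i
  simp [mAct, Matrix.one_apply, apply_ite]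

lemma mAct_conj (σ : GLn n) (y : Fin n → ℂ) :
    mAct σ (fun j => (starRingEnd ℂ) (y j)) = fun j => (starRingEnd ℂ) (mAct σ y j) := by
  funext i
  simp only [mAct, map_sum, map_mul, Complex.conj_ofReal]

lemma polyAct_polyAct (σ τ : GLn n) (p : MvPolynomial (Fin n) ℝ) :
    polyAct τ (polyAct σ p) = polyAct (τ * σ) p := by
  rw [polyAct, polyAct, ← AlgHom.comp_apply, comp_aeval, polyAct]
  have : (fun i => (aeval fun i => ∑ j : Fin n, (τ⁻¹).val i j • X j)
      (∑ j : Fin n, (σ⁻¹).val i j • (X j : MvPolynomial (Fin n) ℝ))) =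
      (fun i => ∑ j : Fin n, ((τ * σ)⁻¹).val i j • (X j : MvPolynomial (Fin n) ℝ)) := by
    funext i
    simp only [map_sum, map_smul, aeval_X, mul_inv_rev, Units.val_mul, Matrix.mul_apply,
      Finset.smul_sum, smul_smul]
    rw [Finset.sum_comm]
    congr 1; funext m
    rw [Finset.sum_smul]
  rw [this]

lemma polyAct_one (p : MvPolynomial (Fin n) ℝ) : polyAct (1 : GLn n) p = p := by
  rw [polyAct]
  have : (fun i => ∑ j : Fin n, ((1 : GLn n)⁻¹).val i j • (X j : MvPolynomial (Fin n) ℝ))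
      = X := by
    funext i
    simp [Matrix.one_apply, ite_smul]
  rw [this, aeval_X_left, AlgHom.id_apply]

lemma aeval_conj (p : MvPolynomial (Fin n) ℝ) (x : Fin n → ℂ) :
    aeval (fun i => (starRingEnd ℂ) (x i)) p = (starRingEnd ℂ) (aeval x p) := by
  have h : (Complex.conjAe.toAlgHom.comp (aeval x) : MvPolynomial (Fin n) ℝ →ₐ[ℝ] ℂ)
      = aeval (fun i => (starRingEnd ℂ) (x i)) := by
    apply MvPolynomial.algHom_ext
    intro i
    simp [Complex.conjAe]
  exact (AlgHom.congr_fun h p).symm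

lemma aeval_realpoint (y : Fin n → ℝ) (p : MvPolynomial (Fin n) ℝ) :
    aeval (fun i => ((y i : ℝ) : ℂ)) p = ((aeval y p : ℝ) : ℂ) := by
  have h : (((Algebra.ofId ℝ ℂ)).comp (aeval y)
      : MvPolynomial (Fin n) ℝ →ₐ[ℝ] ℂ) = aeval (fun i => ((y i : ℝ) : ℂ)) := by
    apply MvPolynomial.algHom_ext
    intro i
    simp [Algebra.ofId_apply]
  exact (AlgHom.congr_fun h p).symm

lemma mem_invariants {G : Subgroup (GLn n)} {p : MvPolynomial (Fin n) ℝ} :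
    p ∈ invariants G ↔ ∀ σ ∈ G, polyAct σ p = p := Iff.rfl

lemma reynolds_eq (G : Subgroup (GLn n)) [Finite G] (p : MvPolynomial (Fin n) ℝ) :
    reynolds G p = (Nat.card G : ℝ)⁻¹ •
      ∑ σ ∈ (Set.toFinite (G : Set (GLn n))).toFinset, polyAct σ p := by
  rw [reynolds, finsum_mem_eq_finite_toFinset_sum _ (Set.toFinite _)]

lemma reynolds_mem_invariants (G : Subgroup (GLn n)) [Finite G] (p : MvPolynomial (Fin n) ℝ) :
    reynolds G p ∈ invariants G := by
  intro τ hτ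
  rw [reynolds_eq, map_smul, map_sum]
  congr 1
  refine Finset.sum_nbij' (fun σ => τ * σ) (fun σ => τ⁻¹ * σ) ?_ ?_ ?_ ?_ ?_
  · intro a ha
    simp only [Set.Finite.mem_toFinset, SetLike.mem_coe] at *
    exact G.mul_mem hτ ha
  · intro a ha
    simp only [Set.Finite.mem_toFinset, SetLike.mem_coe] at *
    exact G.mul_mem (G.inv_mem hτ) ha
  · intro a _; group
  · intro a _; group
  · intro a _
    rw [polyAct_polyAct]

/-! ### signs attached to `ZMod 2` and `±1`-characters -/

noncomputable def sgn (a : ZMod 2) : ℝ := if a = 0 then 1 else -1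

lemma zmod2_cases (a : ZMod 2) : a = 0 ∨ a = 1 := by revert a; decide

lemma sgn_zero : sgn 0 = 1 := if_pos rfl

lemma sgn_one : sgn 1 = -1 := if_neg (by decide)

lemma sgn_add (a b : ZMod 2) : sgn (a + b) = sgn a * sgn b := by
  have h11 : (1 + 1 : ZMod 2) = 0 := by decide
  rcases zmod2_cases a with ha | ha <;> rcases zmod2_cases b with hb | hb <;>
    subst ha <;> subst hb <;>
    simp only [h11, add_zero, zero_add, sgn_zero, sgn_one] <;> norm_num

lemma sgn_sum {ι : Type*} (s : Finset ι) (h : ι → ZMod 2) :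
    ∏ i ∈ s, sgn (h i) = sgn (∑ i ∈ s, h i) := by
  classical
  induction s using Finset.cons_induction with
  | empty => simp [sgn_zero]
  | cons a s ha ih => rw [Finset.prod_cons, Finset.sum_cons, sgn_add, ih]

/-! ### projectors attached to characters of a 2-torsion subgroup -/

variable (T : Subgroup (GLn n)) [Fintype T]

noncomputable def proj (μ : T → ZMod 2) : Matrix (Fin n) (Fin n) ℝ :=
  (Fintype.card T : ℝ)⁻¹ • ∑ σ : T, sgn (μ σ) • ((σ : GLn n) : Matrix (Fin n) (Fin n) ℝ)

noncomputable def Lpoly (μ : T → ZMod 2) (r : Fin n) : MvPolynomial (Fin n) ℝ :=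
  ∑ j, (proj T μ r j) • X j

variable {T}
set_option linter.unusedSectionVars false

lemma mu_one {μ : T → ZMod 2} (hμ : ∀ a b : T, μ (a * b) = μ a + μ b) : μ 1 = 0 := by
  have := hμ 1 1
  rw [mul_one] at this
  rcases zmod2_cases (μ 1) with h | h
  · exact h
  · rw [h] at this; exact absurd this (by decide)

lemma proj_mul_right (hT2 : ∀ σ : T, σ * σ = 1)
    {μ : T → ZMod 2} (hμ : ∀ a b : T, μ (a * b) = μ a + μ b) (τ : T) :
    proj T μ * ((τ : GLn n) : Matrix (Fin n) (Fin n) ℝ) = sgn (μ τ) • proj T μ := by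
  have hτinv : ∀ σ : T, σ * τ * τ = σ := by
    intro σ; rw [mul_assoc, hT2 τ, mul_one]
  rw [proj, Matrix.smul_mul, Finset.sum_mul]
  have : ∀ σ : T, (sgn (μ σ) • ((σ : GLn n) : Matrix (Fin n) (Fin n) ℝ)) *
      ((τ : GLn n) : Matrix (Fin n) (Fin n) ℝ)
      = sgn (μ σ) • (((σ * τ : T) : GLn n) : Matrix (Fin n) (Fin n) ℝ) := by
    intro σ
    rw [Matrix.smul_mul]
    norm_cast
  simp only [this]
  rw [Fintype.sum_equiv (Equiv.mulRight τ)
    (fun σ => sgn (μ σ) • (((σ * τ : T) : GLn n) : Matrix (Fin n) (Fin n) ℝ))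
    (fun ρ => sgn (μ (ρ * τ)) • (((ρ : T) : GLn n) : Matrix (Fin n) (Fin n) ℝ)) ?_]
  · have : ∀ ρ : T, sgn (μ (ρ * τ)) • (((ρ : T) : GLn n) : Matrix (Fin n) (Fin n) ℝ)
        = sgn (μ τ) • (sgn (μ ρ) • (((ρ : T) : GLn n) : Matrix (Fin n) (Fin n) ℝ)) := by
      intro ρ
      rw [hμ, sgn_add, smul_smul, mul_comm]
    simp only [this, ← Finset.smul_sum, proj]
    rw [smul_comm]
  · intro σ
    simp only [Equiv.coe_mulRight, hτinv]

lemma aeval_Lpoly (μ : T → ZMod 2) (r : Fin n) (y : Fin n → ℂ) :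
    aeval y (Lpoly T μ r) = ∑ j, ((proj T μ r j : ℝ) : ℂ) * y j := by
  rw [Lpoly, map_sum]
  congr 1; funext j
  rw [map_smul, aeval_X, Algebra.smul_def]
  rfl

lemma aeval_Lpoly_mAct (hT2 : ∀ σ : T, σ * σ = 1)
    {μ : T → ZMod 2} (hμ : ∀ a b : T, μ (a * b) = μ a + μ b) (τ : T) (r : Fin n)
    (y : Fin n → ℂ) :
    aeval (mAct (τ : GLn n) y) (Lpoly T μ r)
      = sgn (μ τ) * aeval y (Lpoly T μ r) := by
  rw [aeval_Lpoly, aeval_Lpoly]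
  have key : ∀ m : Fin n,
      ((proj T μ * ((τ : GLn n) : Matrix (Fin n) (Fin n) ℝ)) r m : ℝ)
        = sgn (μ τ) * proj T μ r m := by
    intro m
    rw [proj_mul_right hT2 hμ τ]
    simp [Matrix.smul_apply]
  calc ∑ j, ((proj T μ r j : ℝ) : ℂ) * mAct (τ : GLn n) y j
      = ∑ m, (((proj T μ * ((τ : GLn n) : Matrix (Fin n) (Fin n) ℝ)) r m : ℝ) : ℂ) * y m := by
        simp only [mAct, Finset.mul_sum, Matrix.mul_apply]
        rw [Finset.sum_comm]
        congr 1; funext m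
        push_cast
        rw [Finset.sum_mul]
        congr 1; funext j
        ring
    _ = ∑ m, ((sgn (μ τ) : ℂ) * ((proj T μ r m : ℝ) : ℂ)) * y m := by
        simp only [key]
        push_cast
        rfl
    _ = sgn (μ τ) * ∑ m, ((proj T μ r m : ℝ) : ℂ) * y m := by
        rw [Finset.mul_sum]
        congr 1; funext m
        ring

lemma sum_proj_eq_one {ι : Type*} [Fintype ι] (c : ι → (T → ZMod 2))
    (h1 : ∀ i, c i 1 = 0)
    (hchar : ∀ σ : T, σ ≠ 1 → ∑ i : ι, sgn (c i σ) = 0)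
    (hcard : Fintype.card ι = Fintype.card T) :
    ∑ i : ι, proj T (c i) = 1 := by
  have hpos : (0 : ℝ) < Fintype.card T := by
    have : 0 < Fintype.card T := Fintype.card_pos
    exact_mod_cast this
  simp only [proj]
  rw [← Finset.smul_sum, Finset.sum_comm]
  have hterm : ∀ σ : T, (∑ i : ι, sgn (c i σ) • ((σ : GLn n) : Matrix (Fin n) (Fin n) ℝ))
      = (∑ i : ι, sgn (c i σ)) • ((σ : GLn n) : Matrix (Fin n) (Fin n) ℝ) := by
    intro σ; rw [Finset.sum_smul]
  rw [Finset.sum_congr rfl (fun σ _ => hterm σ)]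
  rw [Finset.sum_eq_single_of_mem (1 : T) (Finset.mem_univ 1)
    (fun σ _ hσ => by rw [hchar σ hσ, zero_smul])]
  have hone : (∑ i : ι, sgn (c i 1)) = (Fintype.card T : ℝ) := by
    rw [Finset.sum_congr rfl (fun i _ => by rw [h1 i, sgn_zero]), Finset.sum_const,
      Finset.card_univ, hcard, nsmul_eq_mul, mul_one]
  rw [hone]
  have h1m : (((1 : T) : GLn n) : Matrix (Fin n) (Fin n) ℝ) = 1 := by
    rw [OneMemClass.coe_one, Units.val_one]
  rw [h1m, smul_smul, inv_mul_cancel₀ (ne_of_gt hpos), one_smul]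

lemma sum_aeval_Lpoly {ι : Type*} [Fintype ι] (c : ι → (T → ZMod 2))
    (hproj : ∑ i : ι, proj T (c i) = 1) (y : Fin n → ℂ) (r : Fin n) :
    ∑ i : ι, aeval y (Lpoly T (c i) r) = y r := by
  simp only [aeval_Lpoly]
  rw [Finset.sum_comm]
  have : ∀ j, ∑ i : ι, ((proj T (c i) r j : ℝ) : ℂ) * y j
      = (((∑ i : ι, proj T (c i)) r j : ℝ) : ℂ) * y j := by
    intro j
    rw [← Finset.sum_mul]
    congr 1
    rw [Matrix.sum_apply]
    push_cast
    rfl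
  rw [Finset.sum_congr rfl (fun j _ => this j), hproj]
  simp [Matrix.one_apply, apply_ite]

/-! ### duality for finite `ZMod 2`-vector spaces -/

section Dual
variable (V : Type) [AddCommGroup V] [Module (ZMod 2) V] [Finite V]

lemma fd : FiniteDimensional (ZMod 2) V := Module.Finite.of_finite

lemma card_dual [Fintype V] [Fintype (Module.Dual (ZMod 2) V)] :
    Fintype.card (Module.Dual (ZMod 2) V) = Fintype.card V := by
  haveI := fd V
  rw [Module.card_eq_pow_finrank (K := ZMod 2) (V := V),
    Module.card_eq_pow_finrank (K := ZMod 2) (V := Module.Dual (ZMod 2) V),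
    Subspace.dual_finrank_eq]

lemma sum_sgn_dual [Fintype (Module.Dual (ZMod 2) V)] {v : V} (hv : v ≠ 0) :
    ∑ μ : Module.Dual (ZMod 2) V, sgn (μ v) = 0 := by
  haveI := fd V
  obtain ⟨μ0, hμ0⟩ : ∃ μ0 : Module.Dual (ZMod 2) V, μ0 v ≠ 0 := by
    by_contra h
    push_neg at h
    exact hv ((Module.forall_dual_apply_eq_zero_iff (ZMod 2) v).mp h)
  have hμ0v : μ0 v = 1 := (zmod2_cases (μ0 v)).resolve_left hμ0
  have key : ∑ μ : Module.Dual (ZMod 2) V, sgn ((μ0 + μ) v)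
      = ∑ μ : Module.Dual (ZMod 2) V, sgn (μ v) :=
    Fintype.sum_equiv (Equiv.addLeft μ0) _ _ (fun μ => rfl)
  have : ∀ μ : Module.Dual (ZMod 2) V, sgn ((μ0 + μ) v) = - sgn (μ v) := by
    intro μ
    rw [LinearMap.add_apply, sgn_add, hμ0v, sgn_one]
    ring
  simp only [this, Finset.sum_neg_distrib] at key
  linarith

lemma span_exists_finset [Fintype (Module.Dual (ZMod 2) V)]
    (U : Set (Module.Dual (ZMod 2) V))
    (hU : ∀ v : V, (∀ μ ∈ U, μ v = 0) → v = 0) (χ : Module.Dual (ZMod 2) V) :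
    ∃ B : Finset (Module.Dual (ZMod 2) V), ↑B ⊆ U ∧ ∑ μ ∈ B, μ = χ := by
  classical
  haveI := fd V
  set W' : Submodule (ZMod 2) (Module.Dual (ZMod 2) V) := Submodule.span (ZMod 2) U with hW'
  have htop : W' = ⊤ := by
    have h1 := Subspace.finrank_add_finrank_dualCoannihilator_eq W'
    have h2 : W'.dualCoannihilator = ⊥ := by
      rw [Submodule.eq_bot_iff]
      intro v hv
      rw [Submodule.mem_dualCoannihilator] at hv
      exact hU v (fun μ hμ => hv μ (Submodule.subset_span hμ))
    rw [h2, finrank_bot, add_zero] at h1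
    apply Submodule.eq_top_of_finrank_eq
    rw [h1, Subspace.dual_finrank_eq]
  have hχ : χ ∈ W' := htop ▸ Submodule.mem_top
  clear htop
  induction hχ using Submodule.span_induction with
  | mem φ hφ => exact ⟨{φ}, by simpa using hφ, by simp⟩
  | zero => exact ⟨∅, by simp, by simp⟩
  | add φ ψ hφ hψ ihφ ihψ =>
      obtain ⟨B₁, hB₁, hs₁⟩ := ihφ
      obtain ⟨B₂, hB₂, hs₂⟩ := ihψ
      have hdouble : ∀ w : Module.Dual (ZMod 2) V, w + w = 0 := by
        intro w
        have h2 : (2 : ZMod 2) • w = 0 := by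
          rw [show (2 : ZMod 2) = 0 by decide, zero_smul]
        rwa [show (2 : ZMod 2) = 1 + 1 by decide, add_smul, one_smul] at h2
      have hsub : symmDiff B₁ B₂ ⊆ B₁ ∪ B₂ := by
        have := symmDiff_le_sup (a := B₁) (b := B₂)
        exact this
      refine ⟨symmDiff B₁ B₂, ?_, ?_⟩
      · intro a ha
        rcases Finset.mem_union.mp (hsub ha) with h | h
        · exact hB₁ h
        · exact hB₂ h
      · have hui : (∑ μ ∈ B₁ ∪ B₂, μ) + ∑ μ ∈ B₁ ∩ B₂, μ = (∑ μ ∈ B₁, μ) + ∑ μ ∈ B₂, μ :=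
          Finset.sum_union_inter
        have hsplit : B₁ ∪ B₂ = symmDiff B₁ B₂ ∪ (B₁ ∩ B₂) := by
          have := symmDiff_sup_inf (a := B₁) (b := B₂)
          exact this.symm
        have hdisj : Disjoint (symmDiff B₁ B₂) (B₁ ∩ B₂) := disjoint_symmDiff_inf B₁ B₂
        rw [hsplit, Finset.sum_union hdisj] at hui
        rw [hs₁, hs₂, add_assoc, hdouble (∑ μ ∈ B₁ ∩ B₂, μ), add_zero] at hui
        exact hui
  | smul c φ hφ ihφ =>
      obtain ⟨B, hB, hs⟩ := ihφ
      rcases zmod2_cases c with hc | hc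
      · exact ⟨∅, by simp, by simp [hc]⟩
      · exact ⟨B, hB, by simp [hc, hs]⟩

end Dual

/-! ### the separation lemma -/

lemma exists_tau (G : Subgroup (GLn n)) [Finite G] (x : Fin n → ℂ)
    (hreal : ∀ p ∈ invariants G, (aeval x p).im = 0) :
    ∃ τ ∈ G, mAct τ x = fun j => (starRingEnd ℂ) (x j) := by
  classical
  by_contra hcon
  push_neg at hcon
  set xb : Fin n → ℂ := fun j => (starRingEnd ℂ) (x j) with hxb
  have hQ : ∀ σ ∈ G, (∑ j : Fin n, Polynomial.C (xb j - mAct σ x j) * Polynomial.X ^ (j : ℕ)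
      : Polynomial ℂ) ≠ 0 := by
    intro σ hσ
    have hne : xb ≠ mAct σ x := fun h => hcon σ hσ h.symm
    obtain ⟨j0, hj0⟩ : ∃ j0, xb j0 - mAct σ x j0 ≠ 0 := by
      by_contra h
      push_neg at h
      exact hne (funext fun j => by have := h j; linear_combination this)
    intro h0
    have := congrArg (fun q => Polynomial.coeff q (j0 : ℕ)) h0
    simp only [Polynomial.finset_sum_coeff, Polynomial.coeff_C_mul, Polynomial.coeff_X_pow,
      Polynomial.coeff_zero] at this
    rw [Finset.sum_eq_single j0] at this
    · simp at this
      exact hj0 this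
    · intro b _ hb
      have hbv : (b : ℕ) ≠ (j0 : ℕ) := fun h => hb (Fin.val_injective h)
      rw [if_neg (fun h => hbv h.symm), mul_zero]
    · simp
  set Gf : Finset (GLn n) := (Set.toFinite (G : Set (GLn n))).toFinset with hGf
  have hmemGf : ∀ σ, σ ∈ Gf ↔ σ ∈ G := by
    intro σ; rw [hGf, Set.Finite.mem_toFinset, SetLike.mem_coe]
  set P : Polynomial ℂ :=
    ∏ σ ∈ Gf, (∑ j : Fin n, Polynomial.C (xb j - mAct σ x j) * Polynomial.X ^ (j : ℕ))
    with hPdef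
  have hP : P ≠ 0 := Finset.prod_ne_zero_iff.mpr (fun σ hσ => hQ σ ((hmemGf σ).mp hσ))
  obtain ⟨t, ht⟩ : ∃ t : ℝ, ¬ P.IsRoot (t : ℂ) := by
    have hfin : Set.Finite {z : ℂ | P.IsRoot z} := Polynomial.finite_setOf_isRoot hP
    have hfinR : Set.Finite {t : ℝ | P.IsRoot (t : ℂ)} := by
      have : {t : ℝ | P.IsRoot (t : ℂ)} = Complex.ofReal ⁻¹' {z : ℂ | P.IsRoot z} := rfl
      rw [this]
      exact Set.Finite.preimage Complex.ofReal_injective.injOn hfin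
    obtain ⟨t, ht⟩ := (hfinR.infinite_compl).nonempty
    exact ⟨t, ht⟩
  have hQt : ∀ σ ∈ G, (∑ j : Fin n, (xb j - mAct σ x j) * (t : ℂ) ^ (j : ℕ)) ≠ 0 := by
    intro σ hσ hzero
    apply ht
    unfold P
    rw [Polynomial.IsRoot, Polynomial.eval_prod]
    apply Finset.prod_eq_zero ((hmemGf σ).mpr hσ)
    rw [Polynomial.eval_finset_sum]
    simpa using hzero
  set g : MvPolynomial (Fin n) ℝ := ∑ j : Fin n, (t ^ (j : ℕ)) • X j with hg
  have hgval : ∀ y : Fin n → ℂ, aeval y g = ∑ j : Fin n, (t : ℂ) ^ (j : ℕ) * y j := by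
    intro y
    rw [hg, map_sum]
    congr 1; funext j
    rw [map_smul, aeval_X, Algebra.smul_def]
    push_cast
    rfl
  set F : Polynomial (MvPolynomial (Fin n) ℝ) :=
    ∏ σ ∈ Gf, (Polynomial.X - Polynomial.C (polyAct σ g)) with hF
  have hFcoeff : ∀ m, F.coeff m ∈ invariants G := by
    intro m τ hτ
    have hmap : Polynomial.map ((polyAct τ).toRingHom) F = F := by
      rw [hF, Polynomial.map_prod]
      have hterm : ∀ σ : GLn n, Polynomial.map ((polyAct τ).toRingHom)
          (Polynomial.X - Polynomial.C (polyAct σ g))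
          = Polynomial.X - Polynomial.C (polyAct (τ * σ) g) := by
        intro σ
        rw [Polynomial.map_sub, Polynomial.map_X, Polynomial.map_C]
        congr 1
        exact congrArg _ (polyAct_polyAct σ τ g)
      simp only [hterm]
      refine Finset.prod_nbij' (fun σ => τ * σ) (fun σ => τ⁻¹ * σ) ?_ ?_ ?_ ?_ ?_
      · intro a ha; rw [hmemGf] at *; exact G.mul_mem hτ ha
      · intro a ha; rw [hmemGf] at *; exact G.mul_mem (G.inv_mem hτ) ha
      · intro a _; group
      · intro a _; group
      · intro a _; rfl
    have : polyAct τ (F.coeff m) = (Polynomial.map ((polyAct τ).toRingHom) F).coeff m :=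
      (Polynomial.coeff_map _ _).symm
    rw [this, hmap]
  set Fx : Polynomial ℂ := Polynomial.map ((aeval x : MvPolynomial (Fin n) ℝ →ₐ[ℝ] ℂ).toRingHom) F
    with hFxdef
  have hFx : Fx = ∏ σ ∈ Gf, (Polynomial.X - Polynomial.C (aeval x (polyAct σ g))) := by
    rw [hFxdef, hF, Polynomial.map_prod]
    simp only [Polynomial.map_sub, Polynomial.map_X, Polynomial.map_C]
    rfl
  have hFxconj : Fx.map (starRingEnd ℂ) = Fx := by
    apply Polynomial.ext
    intro m
    rw [Polynomial.coeff_map]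
    apply Complex.conj_eq_iff_im.mpr
    rw [hFxdef, Polynomial.coeff_map]
    exact hreal _ (hFcoeff m)
  have hroot : Fx.eval (aeval x g) = 0 := by
    rw [hFx, Polynomial.eval_prod]
    apply Finset.prod_eq_zero ((hmemGf 1).mpr G.one_mem)
    rw [polyAct_one, Polynomial.eval_sub, Polynomial.eval_X, Polynomial.eval_C, sub_self]
  have hrootc : Fx.eval ((starRingEnd ℂ) (aeval x g)) = 0 := by
    have key : (Fx.map (starRingEnd ℂ)).eval ((starRingEnd ℂ) (aeval x g))
        = (starRingEnd ℂ) (Fx.eval (aeval x g)) := by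
      rw [Polynomial.eval_map]
      have h2 := Polynomial.hom_eval₂ Fx (RingHom.id ℂ) (starRingEnd ℂ) (aeval x g)
      simpa using h2.symm
    rw [← hFxconj, key, hroot, map_zero]
  obtain ⟨σ, hσGf, hσeq⟩ : ∃ σ ∈ Gf,
      (starRingEnd ℂ) (aeval x g) - aeval x (polyAct σ g) = 0 := by
    rw [hFx, Polynomial.eval_prod] at hrootc
    obtain ⟨σ, hσ, h0⟩ := Finset.prod_eq_zero_iff.mp hrootc
    refine ⟨σ, hσ, ?_⟩
    rw [Polynomial.eval_sub, Polynomial.eval_X, Polynomial.eval_C] at h0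
    exact h0
  have hσG : σ ∈ G := (hmemGf σ).mp hσGf
  apply hQt σ⁻¹ (G.inv_mem hσG)
  have h1 : aeval x (polyAct σ g) = ∑ j : Fin n, (t : ℂ) ^ (j : ℕ) * (mAct σ⁻¹ x j) := by
    rw [aeval_polyAct, hgval]
  have h2 : (starRingEnd ℂ) (aeval x g) = ∑ j : Fin n, (t : ℂ) ^ (j : ℕ) * xb j := by
    rw [hgval, map_sum]
    congr 1; funext j
    rw [map_mul, map_pow, Complex.conj_ofReal]
  rw [h1, h2, ← Finset.sum_sub_distrib] at hσeq
  rw [← hσeq]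
  congr 1; funext j
  ring

end S17

set_option maxHeartbeats 2000000 in
/-- if `G` is a finite abelian subgroup of `GL_n(ℝ)` whose 2-torsion
subgroup has order `2^k`, then there are `f₁,…,f_k ∈ ℝ[X]^G` such that for every
`x ∈ ℂⁿ` with trivial `G`-stabilizer at which all `G`-invariants are real:
`Re(fᵢ(x)) ≥ 0` for all `i` iff `σ·x ∈ ℝⁿ` for some `σ ∈ G`. -/
theorem statement_17 {n k : ℕ}
    (G : Subgroup (Matrix.GeneralLinearGroup (Fin n) ℝ)) [Finite G]
    (habelian : ∀ a ∈ G, ∀ b ∈ G, a * b = b * a)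
    (h2tor : Nat.card {σ : G // σ ^ 2 = 1} = 2 ^ k) :
    ∃ f : Fin k → MvPolynomial (Fin n) ℝ,
      (∀ i, f i ∈ invariants G) ∧
      ∀ x : Fin n → ℂ,
        (∀ σ ∈ G, mAct σ x = x → σ = 1) →
        (∀ p ∈ invariants G, (aeval x p).im = 0) →
        ((∀ i, 0 ≤ (aeval x (f i)).re) ↔ ∃ σ ∈ G, ∀ j, ((mAct σ x) j).im = 0) := by
  classical
  -- the 2-torsion subgroup
  let Tsub : Subgroup (S17.GLn n) :=
    { carrier := {σ | σ ∈ G ∧ σ ^ 2 = 1}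
      mul_mem' := by
        rintro a b ⟨haG, ha2⟩ ⟨hbG, hb2⟩
        refine ⟨G.mul_mem haG hbG, ?_⟩
        have hc : b * a = a * b := (habelian a haG b hbG).symm
        rw [sq]
        calc a * b * (a * b) = a * ((b * a) * b) := by simp only [mul_assoc]
          _ = a * ((a * b) * b) := by rw [hc]
          _ = (a * a) * (b * b) := by simp only [mul_assoc]
          _ = 1 := by rw [← sq, ← sq, ha2, hb2, mul_one]
      one_mem' := ⟨G.one_mem, one_pow 2⟩
      inv_mem' := by
        rintro a ⟨haG, ha2⟩
        exact ⟨G.inv_mem haG, by rw [inv_pow, ha2, inv_one]⟩ }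
  have hTmem : ∀ σ, σ ∈ Tsub ↔ (σ ∈ G ∧ σ ^ 2 = 1) := fun σ => Iff.rfl
  have hTsubG : ∀ σ, σ ∈ Tsub → σ ∈ G := fun σ h => ((hTmem σ).mp h).1
  haveI hTfin : Finite ↥Tsub := by
    refine Finite.of_injective (fun σ : ↥Tsub => (⟨σ.1, hTsubG _ σ.2⟩ : ↥G)) ?_
    intro a b hab
    exact Subtype.ext (congrArg (fun s : ↥G => s.1) hab)
  letI : Fintype ↥Tsub := Fintype.ofFinite _
  have hT2 : ∀ σ : ↥Tsub, σ * σ = 1 := by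
    intro σ
    apply Subtype.ext
    have h2 : (σ : S17.GLn n) ^ 2 = 1 := ((hTmem _).mp σ.2).2
    rw [← sq] at *
    exact h2
  have hcardT : Nat.card ↥Tsub = 2 ^ k := by
    rw [← h2tor]
    apply Nat.card_congr
    refine ⟨fun σ => ⟨⟨σ.1, hTsubG _ σ.2⟩, ?_⟩,
      fun s => ⟨s.1.1, (hTmem _).mpr ⟨s.1.2, ?_⟩⟩, ?_, ?_⟩
    · apply Subtype.ext
      rw [SubmonoidClass.coe_pow]
      exact ((hTmem _).mp σ.2).2
    · have := congrArg Subtype.val s.2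
      rw [SubmonoidClass.coe_pow] at this
      exact this
    · intro σ; rfl
    · intro s; rfl
  letI : CommGroup ↥Tsub :=
    { (inferInstance : Group ↥Tsub) with
      mul_comm := fun a b => Subtype.ext (habelian a.1 (hTsubG _ a.2) b.1 (hTsubG _ b.2)) }
  let V := Additive ↥Tsub
  letI : Module (ZMod 2) V := AddCommGroup.zmodModule (n := 2) (by
    intro v
    rw [two_nsmul]
    exact congrArg (⇑Additive.ofMul) (hT2 (Additive.toMul v)))
  haveI : Finite V := Finite.of_equiv _ Additive.ofMul
  letI : Fintype V := Fintype.ofFinite V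
  haveI : FiniteDimensional (ZMod 2) V := S17.fd V
  have hcardV : Nat.card V = 2 ^ k := by
    rw [← hcardT]
    exact Nat.card_congr Additive.toMul
  have hfr : Module.finrank (ZMod 2) V = k := by
    have hc := Module.card_eq_pow_finrank (K := ZMod 2) (V := V)
    rw [ZMod.card] at hc
    have h2 : (2 : ℕ) ^ (Module.finrank (ZMod 2) V) = 2 ^ k := by
      rw [← hc, ← Nat.card_eq_fintype_card, hcardV]
    exact Nat.pow_right_injective (by norm_num) h2
  let b : Module.Basis (Fin k) (ZMod 2) V := Module.finBasisOfFinrankEq (ZMod 2) V hfr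
  haveI : Finite (Module.Dual (ZMod 2) V) :=
    Finite.of_injective (fun μ : Module.Dual (ZMod 2) V => (μ : V → ZMod 2))
      DFunLike.coe_injective
  letI : Fintype (Module.Dual (ZMod 2) V) := Fintype.ofFinite _
  set ch : Module.Dual (ZMod 2) V → (↥Tsub → ZMod 2) :=
    fun μ σ => μ (Additive.ofMul σ) with hchdef
  have hch : ∀ μ, ∀ a c : ↥Tsub, ch μ (a * c) = ch μ a + ch μ c := by
    intro μ a c
    show μ (Additive.ofMul (a * c)) = μ (Additive.ofMul a) + μ (Additive.ofMul c)
    exact map_add μ (Additive.ofMul a) (Additive.ofMul c)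
  have hch1 : ∀ μ, ch μ 1 = 0 := fun μ => S17.mu_one (hch μ)
  have hproj1 : ∑ μ : Module.Dual (ZMod 2) V, S17.proj Tsub (ch μ) = 1 := by
    apply S17.sum_proj_eq_one ch hch1
    · intro σ hσ
      have hv : Additive.ofMul σ ≠ (0 : V) := by
        intro h0
        apply hσ
        have := congrArg Additive.toMul h0
        simpa using this
      exact S17.sum_sgn_dual V hv
    · calc Fintype.card (Module.Dual (ZMod 2) V) = Fintype.card V := S17.card_dual V
        _ = Fintype.card ↥Tsub := Fintype.card_congr Additive.toMul
  set ℓ : Module.Dual (ZMod 2) V × Fin n → MvPolynomial (Fin n) ℝ :=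
    fun a => S17.Lpoly Tsub (ch a.1) a.2 with hldef
  set wt : Finset (Module.Dual (ZMod 2) V × Fin n) → Module.Dual (ZMod 2) V :=
    fun A => ∑ a ∈ A, a.1 with hwtdef
  set mono : Finset (Module.Dual (ZMod 2) V × Fin n) → MvPolynomial (Fin n) ℝ :=
    fun A => ∏ a ∈ A, ℓ a with hmonodef
  set pp : Module.Dual (ZMod 2) V → MvPolynomial (Fin n) ℝ :=
    fun χ => ∑ A ∈ Finset.univ.powerset.filter (fun A => wt A = χ), (mono A) ^ 2 with hppdef
  refine ⟨fun i => reynolds G (pp (b.coord i)),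
    fun i => S17.reynolds_mem_invariants G _, ?_⟩
  intro x hstab hreal
  set Gf : Finset (S17.GLn n) := (Set.toFinite (G : Set (S17.GLn n))).toFinset with hGfdef
  have hmemGf : ∀ σ, σ ∈ Gf ↔ σ ∈ G := by
    intro σ; rw [hGfdef, Set.Finite.mem_toFinset, SetLike.mem_coe]
  have hcardG0 : (0 : ℝ) < (Nat.card G : ℝ) := by exact_mod_cast Nat.card_pos
  -- evaluation of the Reynolds average
  have hfval : ∀ χ, aeval x (reynolds G (pp χ)) = (Nat.card G : ℝ)⁻¹ •
      ∑ σ ∈ Gf, aeval (mAct σ⁻¹ x) (pp χ) := by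
    intro χ
    rw [S17.reynolds_eq, map_smul, map_sum, ← hGfdef]
    congr 1
    exact Finset.sum_congr rfl (fun σ _ => S17.aeval_polyAct σ x (pp χ))
  -- evaluation of pp as a sum of squares of monomial values
  have hppval : ∀ (χ) (y : Fin n → ℂ), aeval y (pp χ)
      = ∑ A ∈ Finset.univ.powerset.filter (fun A => wt A = χ), (aeval y (mono A)) ^ 2 := by
    intro χ y
    rw [hppdef, map_sum]
    exact Finset.sum_congr rfl (fun A _ => map_pow _ _ _)
  have hmonoval : ∀ (A) (y : Fin n → ℂ), aeval y (mono A) = ∏ a ∈ A, aeval y (ℓ a) := by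
    intro A y
    rw [hmonodef]
    exact map_prod _ _ _
  constructor
  · -- hard direction
    intro hge
    obtain ⟨τgl, hτG, hτ⟩ := S17.exists_tau G x hreal
    have hmm : mAct (τgl * τgl) x = x := by
      rw [← S17.mAct_mul]
      calc mAct τgl (mAct τgl x) = mAct τgl (fun j => (starRingEnd ℂ) (x j)) := by rw [hτ]
        _ = fun j => (starRingEnd ℂ) (mAct τgl x j) := S17.mAct_conj τgl x
        _ = x := by
            funext j
            rw [hτ]
            exact Complex.conj_conj (x j)
    have hτ2 : τgl ^ 2 = 1 := hstab _ (pow_mem hτG 2) (by rw [sq]; exact hmm)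
    set τ : ↥Tsub := ⟨τgl, (hTmem τgl).mpr ⟨hτG, hτ2⟩⟩ with hτdef
    suffices hv0 : (Additive.ofMul τ : V) = 0 by
      have hτ1 : τgl = 1 := by
        have hτone : τ = 1 := by
          have := congrArg Additive.toMul hv0
          simpa using this
        exact congrArg Subtype.val hτone
      refine ⟨1, G.one_mem, ?_⟩
      intro j
      rw [S17.mAct_one]
      have hxx : (fun j => (starRingEnd ℂ) (x j)) = x := by
        rw [← hτ, hτ1, S17.mAct_one]
      exact Complex.conj_eq_iff_im.mp (congrFun hxx j)
    rw [← b.forall_coord_eq_zero_iff]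
    intro i
    by_contra hne
    have hχv : b.coord i (Additive.ofMul τ) = 1 := (S17.zmod2_cases _).resolve_left hne
    set χ : Module.Dual (ZMod 2) V := b.coord i with hχdef
    set filt := Finset.univ.powerset.filter (fun A => wt A = χ) with hfiltdef
    -- conjugation acts on each orbit point through τ
    have hconjM : ∀ σ ∈ Gf, ∀ A ∈ filt,
        (starRingEnd ℂ) (aeval (mAct σ⁻¹ x) (mono A)) = - aeval (mAct σ⁻¹ x) (mono A) := by
      intro σ hσf A hA
      have hσG := (hmemGf σ).mp hσf
      set y : Fin n → ℂ := mAct σ⁻¹ x with hy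
      have hwt : wt A = χ := (Finset.mem_filter.mp hA).2
      have hconjy : (fun j => (starRingEnd ℂ) (y j)) = mAct τgl y := by
        calc (fun j => (starRingEnd ℂ) (y j))
            = mAct σ⁻¹ (fun j => (starRingEnd ℂ) (x j)) := (S17.mAct_conj σ⁻¹ x).symm
          _ = mAct σ⁻¹ (mAct τgl x) := by rw [hτ]
          _ = mAct (σ⁻¹ * τgl) x := S17.mAct_mul _ _ x
          _ = mAct (τgl * σ⁻¹) x := by rw [habelian σ⁻¹ (G.inv_mem hσG) τgl hτG]
          _ = mAct τgl y := (S17.mAct_mul τgl σ⁻¹ x).symm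
      have h1 : (starRingEnd ℂ) (aeval y (mono A)) = aeval (mAct τgl y) (mono A) := by
        rw [← S17.aeval_conj, hconjy]
      have h2 : ∀ a ∈ A, aeval (mAct τgl y) (ℓ a)
          = (S17.sgn (ch a.1 τ) : ℂ) * aeval y (ℓ a) := by
        intro a _
        exact S17.aeval_Lpoly_mAct hT2 (hch a.1) τ a.2 y
      have h3 : (∏ a ∈ A, (S17.sgn (ch a.1 τ) : ℂ)) = -1 := by
        have h4 : ∏ a ∈ A, S17.sgn (ch a.1 τ) = S17.sgn (χ (Additive.ofMul τ)) := by
          rw [S17.sgn_sum A (fun a => ch a.1 τ)]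
          congr 1
          show ∑ a ∈ A, a.1 (Additive.ofMul τ) = χ (Additive.ofMul τ)
          rw [← hwt, hwtdef, ← LinearMap.sum_apply]
        rw [← Complex.ofReal_prod, h4, hχv, S17.sgn_one]
        norm_num
      rw [h1, hmonoval A (mAct τgl y), Finset.prod_congr rfl h2,
        Finset.prod_mul_distrib, h3, hmonoval A y]
      ring
    -- each Reynolds term has nonpositive real part
    have hterm : ∀ σ ∈ Gf, (aeval (mAct σ⁻¹ x) (pp χ)).re
        = - ∑ A ∈ filt, ((aeval (mAct σ⁻¹ x) (mono A)).im) ^ 2 := by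
      intro σ hσf
      rw [hppval χ (mAct σ⁻¹ x), ← hfiltdef, Complex.re_sum, ← Finset.sum_neg_distrib]
      apply Finset.sum_congr rfl
      intro A hA
      have hM := hconjM σ hσf A hA
      have hre : (aeval (mAct σ⁻¹ x) (mono A)).re = 0 := by
        have := congrArg Complex.re hM
        rw [Complex.conj_re, Complex.neg_re] at this
        linarith
      rw [sq, Complex.mul_re, hre]
      ring
    have hretotal : (aeval x (reynolds G (pp χ))).re
        = (Nat.card G : ℝ)⁻¹ * ∑ σ ∈ Gf, (aeval (mAct σ⁻¹ x) (pp χ)).re := by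
      rw [hfval χ, Complex.real_smul, Complex.mul_re, Complex.ofReal_re, Complex.ofReal_im,
        Complex.re_sum]
      ring
    have hSnn : 0 ≤ ∑ σ ∈ Gf, ∑ A ∈ filt, ((aeval (mAct σ⁻¹ x) (mono A)).im) ^ 2 :=
      Finset.sum_nonneg (fun σ _ => Finset.sum_nonneg (fun A _ => sq_nonneg _))
    have hS : ∑ σ ∈ Gf, ∑ A ∈ filt, ((aeval (mAct σ⁻¹ x) (mono A)).im) ^ 2 = 0 := by
      have h0 : 0 ≤ (aeval x (reynolds G (pp χ))).re := hge i
      rw [hretotal, Finset.sum_congr rfl hterm, Finset.sum_neg_distrib] at h0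
      have hinvpos : 0 < (Nat.card G : ℝ)⁻¹ := by positivity
      nlinarith
    have h1Gf : (1 : S17.GLn n) ∈ Gf := (hmemGf 1).mpr G.one_mem
    have hzero : ∀ A ∈ filt, aeval x (mono A) = 0 := by
      intro A hA
      have hσsum : ∑ A ∈ filt, ((aeval (mAct (1 : S17.GLn n)⁻¹ x) (mono A)).im) ^ 2 = 0 :=
        (Finset.sum_eq_zero_iff_of_nonneg
          (fun σ' _ => Finset.sum_nonneg (fun A' _ => sq_nonneg _))).mp hS 1 h1Gf
      have hA0 : ((aeval (mAct (1 : S17.GLn n)⁻¹ x) (mono A)).im) ^ 2 = 0 :=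
        (Finset.sum_eq_zero_iff_of_nonneg (fun A' _ => sq_nonneg _)).mp hσsum A hA
      have him : (aeval (mAct (1 : S17.GLn n)⁻¹ x) (mono A)).im = 0 := by
        exact pow_eq_zero_iff (by norm_num) |>.mp hA0
      have hM := hconjM 1 h1Gf A hA
      have hre : (aeval (mAct (1 : S17.GLn n)⁻¹ x) (mono A)).re = 0 := by
        have := congrArg Complex.re hM
        rw [Complex.conj_re, Complex.neg_re] at this
        linarith
      have hx1 : mAct (1 : S17.GLn n)⁻¹ x = x := by rw [inv_one, S17.mAct_one]
      rw [hx1] at hre him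
      apply Complex.ext <;> simp [hre, him]
    set U : Set (Module.Dual (ZMod 2) V) := {μ | ∃ r, aeval x (ℓ (μ, r)) ≠ 0} with hUdef
    have hUsep : ∀ v' : V, (∀ μ ∈ U, μ v' = 0) → v' = 0 := by
      intro v' hvanish
      set σ' : ↥Tsub := Additive.toMul v' with hσ'def
      have hfix : mAct (σ' : S17.GLn n) x = x := by
        funext r
        have e1 : ∑ μ : Module.Dual (ZMod 2) V,
            aeval (mAct (σ' : S17.GLn n) x) (S17.Lpoly Tsub (ch μ) r)
            = mAct (σ' : S17.GLn n) x r := S17.sum_aeval_Lpoly ch hproj1 _ r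
        have e2 : ∑ μ : Module.Dual (ZMod 2) V, aeval x (S17.Lpoly Tsub (ch μ) r) = x r :=
          S17.sum_aeval_Lpoly ch hproj1 x r
        rw [← e1, ← e2]
        apply Finset.sum_congr rfl
        intro μ _
        rw [S17.aeval_Lpoly_mAct hT2 (hch μ) σ' r x]
        by_cases hμU : μ ∈ U
        · have hc0 : ch μ σ' = 0 := by
            show μ (Additive.ofMul σ') = 0
            rw [hσ'def]
            exact hvanish μ hμU
          rw [hc0, S17.sgn_zero, Complex.ofReal_one, one_mul]
        · have hc0 : aeval x (S17.Lpoly Tsub (ch μ) r) = 0 := by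
            by_contra hne0
            exact hμU ⟨r, hne0⟩
          rw [hc0, mul_zero]
      have hσ'GL : (σ' : S17.GLn n) = 1 := hstab _ (hTsubG _ σ'.2) hfix
      have hσ'1 : σ' = 1 := Subtype.ext hσ'GL
      rw [hσ'def] at hσ'1
      have := congrArg Additive.ofMul hσ'1
      simpa using this
    obtain ⟨B, hBU, hBsum⟩ := S17.span_exists_finset V U hUsep χ
    have hchoose : ∀ μ ∈ B, ∃ r, aeval x (ℓ (μ, r)) ≠ 0 := fun μ hμ => hBU hμ
    set A0 : Finset (Module.Dual (ZMod 2) V × Fin n) :=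
      B.attach.image (fun μh => (μh.1, (hchoose μh.1 μh.2).choose)) with hA0def
    have hA0prop : ∀ a ∈ A0, aeval x (ℓ a) ≠ 0 := by
      intro a ha
      rw [hA0def] at ha
      obtain ⟨μh, _, rfl⟩ := Finset.mem_image.mp ha
      exact (hchoose μh.1 μh.2).choose_spec
    have hwtA0 : wt A0 = χ := by
      rw [hA0def, hwtdef]
      show ∑ a ∈ B.attach.image (fun μh => (μh.1, (hchoose μh.1 μh.2).choose)), a.1 = χ
      rw [Finset.sum_image (by
        intro a _ c _ hac
        exact Subtype.ext (congrArg Prod.fst hac))]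
      rw [Finset.sum_attach B (fun μ => μ)]
      exact hBsum
    have hA0filt : A0 ∈ filt := by
      rw [hfiltdef]
      exact Finset.mem_filter.mpr ⟨Finset.mem_powerset.mpr (Finset.subset_univ _), hwtA0⟩
    have hne0 : aeval x (mono A0) ≠ 0 := by
      rw [hmonoval A0 x]
      exact Finset.prod_ne_zero_iff.mpr hA0prop
    exact hne0 (hzero A0 hA0filt)
  · -- easy direction: a real point in the orbit
    rintro ⟨σ0, hσ0G, hσ0⟩ i
    set y : Fin n → ℂ := mAct σ0 x with hy
    have hinv : polyAct σ0⁻¹ (reynolds G (pp (b.coord i))) = reynolds G (pp (b.coord i)) :=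
      S17.reynolds_mem_invariants G _ σ0⁻¹ (G.inv_mem hσ0G)
    have hxy : aeval x (reynolds G (pp (b.coord i)))
        = aeval y (reynolds G (pp (b.coord i))) := by
      conv_lhs => rw [← hinv]
      rw [S17.aeval_polyAct, inv_inv]
    set yr : Fin n → ℝ := fun j => (y j).re with hyr
    have hyeq : y = fun j => ((yr j : ℝ) : ℂ) := by
      funext j
      apply Complex.ext
      · simp [hyr]
      · rw [hyr]
        simp only [Complex.ofReal_im]
        exact hσ0 j
    have hfin : aeval x (reynolds G (pp (b.coord i)))
        = ((aeval yr (reynolds G (pp (b.coord i))) : ℝ) : ℂ) := by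
      rw [hxy, hyeq, S17.aeval_realpoint]
    show 0 ≤ (aeval x (reynolds G (pp (b.coord i)))).re
    rw [hfin, Complex.ofReal_re]
    rw [S17.reynolds_eq, map_smul, smul_eq_mul]
    apply mul_nonneg (by positivity)
    rw [map_sum]
    apply Finset.sum_nonneg
    intro σ hσ
    rw [S17.aeval_polyAct', hppdef, map_sum]
    apply Finset.sum_nonneg
    intro A _
    rw [map_pow]
    exact sq_nonneg _
end
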